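/- arXiv:2412.08617 — 3 statements merged into one kernel-verified Lean document; each statement's English description precedes it below -/
import Mathlib

section
/- For every integer L ≥ 1, let B_L be the propagator-type graph with L loops consisting of L four-valent vertices arranged in a path, with consecutive vertices joined by double edges, a self-loop at one end vertex, and two external half-edges at the other end vertex (a chain of L−1 one-loop 'fish' bubbles terminated by a tadpole). Then the circuit partition polynomial satisfies J(B_L, N) = (N+2)^L. -/
/-- A finite multigraph presented by half-edges: `vtx h` is the vertex at which the
half-edge `h` is attached, and `edg` is an involution pairing the two half-edges of
each internal edge; its fixed points are the external half-edges. -/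
structure HGraph where
  V : Type
  H : Type
  fintypeV : Fintype V
  fintypeH : Fintype H
  decEqV : DecidableEq V
  decEqH : DecidableEq H
  vtx : H → V
  edg : H → H
  edg_invol : ∀ h, edg (edg h) = h

attribute [instance] HGraph.fintypeV HGraph.fintypeH HGraph.decEqV HGraph.decEqH

namespace HGraph

variable (G : HGraph)

/-- A half-edge is external if the edge involution fixes it. -/
def IsExternal (h : G.H) : Prop := G.edg h = h

instance : DecidablePred G.IsExternal := fun h => inferInstanceAs (Decidable (G.edg h = h))

/-- The valence of a vertex: the number of half-edges incident to it. -/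
def valence (v : G.V) : ℕ := Fintype.card {h : G.H // G.vtx h = v}

/-- The number of external half-edges. -/
def extCard : ℕ := Fintype.card {h : G.H // G.IsExternal h}

/-- A vacuum graph has no external half-edges. -/
def IsVacuum : Prop := ∀ h : G.H, ¬ G.IsExternal h

/-- A decomposition of a graph: at every vertex, a partition of the incident
half-edges into pairs (encoded as a fixed-point-free involution fixing each vertex). -/
def Decomp : Type :=
  {p : G.H → G.H //
    (∀ h, p (p h) = h) ∧ (∀ h, p h ≠ h) ∧ ∀ h, G.vtx (p h) = G.vtx h}

instance : Fintype G.Decomp :=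
  inferInstanceAs (Fintype {p : G.H → G.H //
    (∀ h, p (p h) = h) ∧ (∀ h, p h ≠ h) ∧ ∀ h, G.vtx (p h) = G.vtx h})

/-- Two half-edges are one step apart (relative to a decomposition `d`) if they are
joined by an edge or paired at a vertex by `d`. -/
def dstep (d : G.Decomp) (h h' : G.H) : Prop := G.edg h = h' ∨ d.1 h = h'

/-- The circuits and paths of a decomposition are the equivalence classes of the
relation generated by `dstep`. -/
def dsetoid (d : G.Decomp) : Setoid G.H :=
  ⟨Relation.EqvGen (G.dstep d), Relation.EqvGen.is_equivalence _⟩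

/-- The type of circuits/paths of a decomposition. -/
def Circuits (d : G.Decomp) : Type := Quotient (G.dsetoid d)

def circuitOf (d : G.Decomp) (h : G.H) : G.Circuits d := Quotient.mk (G.dsetoid d) h

/-- A circuit is closed if it contains no external half-edge (otherwise it is an
open path ending at external half-edges). -/
def IsClosed (d : G.Decomp) (c : G.Circuits d) : Prop :=
  ∀ h : G.H, G.circuitOf d h = c → ¬ G.IsExternal h

/-- The number of closed circuits of a decomposition. -/
noncomputable def ncircuits (d : G.Decomp) : ℕ :=
  Nat.card {c : G.Circuits d // G.IsClosed d c}

/-- The circuit partition polynomial `J(G,N)`: the sum over all decompositions of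
`N` raised to the number of closed circuits. -/
noncomputable def J : Polynomial ℤ :=
  ∑ d : G.Decomp, (Polynomial.X : Polynomial ℤ) ^ G.ncircuits d

/-- The O(N) symmetry factor `T(G,N) = J(G,N)/J(G,1)`. -/
noncomputable def T : Polynomial ℚ :=
  Polynomial.C (((G.J.eval 1 : ℤ) : ℚ))⁻¹ * G.J.map (Int.castRingHom ℚ)

/-- Two vertices are adjacent if some edge connects them. -/
def adj (v w : G.V) : Prop := ∃ h : G.H, G.vtx h = v ∧ G.vtx (G.edg h) = w

/-- The graph is connected. -/
def Connected : Prop := ∀ v w : G.V, Relation.ReflTransGen G.adj v w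

/-- An `L`-loop completion: a connected 4-regular vacuum graph with `L+2` vertices. -/
def IsCompletion (L : ℕ) : Prop :=
  G.IsVacuum ∧ G.Connected ∧ (∀ v, G.valence v = 4) ∧ Fintype.card G.V = L + 2

/-- The number of edges crossing from `S` to its complement. -/
def cutSize (S : Finset G.V) : ℕ :=
  (Finset.univ.filter fun h : G.H => G.vtx h ∈ S ∧ G.vtx (G.edg h) ∉ S).card

/-- The induced subgraph on `S` contains a cycle: there is a nonempty set of
internal half-edges inside `S`, closed under the edge involution, in which every
incident vertex meets at least two of these half-edges. -/
def HasCycleIn (S : Set G.V) : Prop :=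
  ∃ E : Finset G.H, E.Nonempty ∧
    (∀ h ∈ E, G.vtx h ∈ S ∧ ¬ G.IsExternal h ∧ G.edg h ∈ E) ∧
    ∀ h ∈ E, 2 ≤ (E.filter fun h' => G.vtx h' = G.vtx h).card

/-- Cyclic 6-edge-connectivity: every edge cut separating two subgraphs which each
contain a cycle has at least 6 edges. -/
def CyclicallySixEdgeConnected : Prop :=
  ∀ S : Finset G.V, G.HasCycleIn ↑S → G.HasCycleIn ↑(Sᶜ) → 6 ≤ G.cutSize S

/-- A primitive `L`-loop completion. -/
def IsPrimitiveCompletion (L : ℕ) : Prop :=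
  G.IsCompletion L ∧ G.CyclicallySixEdgeConnected

end HGraph

/-- Isomorphism of half-edge multigraphs. -/
structure HGraph.Iso (G₁ G₂ : HGraph) where
  eV : G₁.V ≃ G₂.V
  eH : G₁.H ≃ G₂.H
  vtx_eq : ∀ h, G₂.vtx (eH h) = eV (G₁.vtx h)
  edg_eq : ∀ h, G₂.edg (eH h) = eH (G₁.edg h)

/-- Two graphs are isomorphic. -/
def HGraph.IsIsomorphic (G₁ G₂ : HGraph) : Prop := Nonempty (HGraph.Iso G₁ G₂)
/-- A chain of `n` four-valent vertices `0, …, n-1`, consecutive vertices joined by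
double edges.  At the left end (vertex `0`), the two remaining half-edges form a
self-loop if `leftLoop = true`, and are external otherwise; similarly at the right
end (vertex `n-1`) according to `rightLoop`. -/
def chainGraph (n : ℕ) (hn : 1 ≤ n) (leftLoop rightLoop : Bool) : HGraph :=
  haveI : NeZero n := ⟨by omega⟩
  { V := Fin n
    H := Fin n × Fin 4
    fintypeV := inferInstance
    fintypeH := inferInstance
    decEqV := inferInstance
    decEqH := inferInstance
    vtx := Prod.fst
    edg := fun q =>
      ![ (if q.1 = 0 then (q.1, (if leftLoop then (1 : Fin 4) else 0)) else (q.1 - 1, 2)),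
         (if q.1 = 0 then (q.1, (if leftLoop then (0 : Fin 4) else 1)) else (q.1 - 1, 3)),
         (if q.1 + 1 = 0 then (q.1, (if rightLoop then (3 : Fin 4) else 2)) else (q.1 + 1, 0)),
         (if q.1 + 1 = 0 then (q.1, (if rightLoop then (2 : Fin 4) else 3)) else (q.1 + 1, 1)) ] q.2
    edg_invol := by
      rintro ⟨i, j⟩
      have hsub : i - 1 + 1 = i := sub_add_cancel i 1
      have hadd : i + 1 - 1 = i := add_sub_cancel_right i 1
      fin_cases j <;> cases leftLoop <;> cases rightLoop <;>
        by_cases h0 : i = 0 <;> by_cases h1 : i + 1 = 0 <;>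
          simp_all }

namespace Bub

open Finset

def m3 : Fin 3 → Fin 4 → Fin 4
  | 0 => ![1,0,3,2]
  | 1 => ![2,3,0,1]
  | 2 => ![3,2,1,0]

lemma m3_invol : ∀ a j, m3 a (m3 a j) = j := by decide
lemma m3_ne : ∀ a j, m3 a j ≠ j := by decide
lemma m3_inj0 : ∀ a b, m3 a 0 = m3 b 0 → a = b := by decide
lemma m3_zero_fst : m3 0 0 = 1 ∧ m3 0 1 = 0 := by decide
lemma m3_big : ∀ a, a ≠ 0 → 2 ≤ (m3 a 0).val ∧ 2 ≤ (m3 a 1).val := by decide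

def decode3 : Fin 4 → Fin 3 := ![0, 0, 1, 2]

set_option maxRecDepth 10000 in
lemma invol_eq_m3 : ∀ σ : Fin 4 → Fin 4, (∀ j, σ (σ j) = j) → (∀ j, σ j ≠ j) →
    ∀ j, σ j = m3 (decode3 (σ 0)) j := by decide

variable {L : ℕ} {hL : 1 ≤ L}

/-- The decomposition of `chainGraph L hL true false` determined by a choice of pairing
(`0` = reflect, `1` = parallel, `2` = cross) at each vertex. -/
def pf (hL : 1 ≤ L) (f : ℕ → Fin 3) : (chainGraph L hL true false).Decomp :=
  ⟨fun q => (q.1, m3 (f q.1.val) q.2),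
    ⟨fun q => by show (q.1, m3 _ (m3 _ q.2)) = q; rw [m3_invol]; exact Prod.mk.eta,
     fun q hq => m3_ne (f q.1.val) q.2 (congrArg Prod.snd hq),
     fun _ => rfl⟩⟩

section edg

variable (hL : 1 ≤ L) [NeZero L]

lemma edg_00 {i : Fin L} (h : i = 0) :
    (chainGraph L hL true false).edg (i, 0) = (i, 1) := by
  simp [chainGraph, h]
lemma edg_01 {i : Fin L} (h : i ≠ 0) :
    (chainGraph L hL true false).edg (i, 0) = (i - 1, 2) := by
  simp [chainGraph, h]
lemma edg_10 {i : Fin L} (h : i = 0) :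
    (chainGraph L hL true false).edg (i, 1) = (i, 0) := by
  simp [chainGraph, h]
lemma edg_11 {i : Fin L} (h : i ≠ 0) :
    (chainGraph L hL true false).edg (i, 1) = (i - 1, 3) := by
  simp [chainGraph, h]
lemma edg_20 {i : Fin L} (h : i + 1 = 0) :
    (chainGraph L hL true false).edg (i, 2) = (i, 2) := by
  simp [chainGraph, h]
lemma edg_21 {i : Fin L} (h : i + 1 ≠ 0) :
    (chainGraph L hL true false).edg (i, 2) = (i + 1, 0) := by
  simp [chainGraph, h]
lemma edg_30 {i : Fin L} (h : i + 1 = 0) :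
    (chainGraph L hL true false).edg (i, 3) = (i, 3) := by
  simp [chainGraph, h]
lemma edg_31 {i : Fin L} (h : i + 1 ≠ 0) :
    (chainGraph L hL true false).edg (i, 3) = (i + 1, 1) := by
  simp [chainGraph, h]

end edg

/-- Position of the next "reflect" vertex at or after `m`, or `L` if none. -/
def nextA (f : ℕ → Fin 3) (L : ℕ) (m : ℕ) : ℕ :=
  if h : m < L then (if f m = 0 then m else nextA f L (m + 1)) else L
termination_by L - m

variable {f : ℕ → Fin 3} {m : ℕ}

lemma nextA_ge (h : L ≤ m) : nextA f L m = L := by rw [nextA]; simp [Nat.not_lt.2 h]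

lemma nextA_hit (hm : m < L) (h : f m = 0) : nextA f L m = m := by rw [nextA]; simp [hm, h]

lemma nextA_skip (hm : m < L) (h : f m ≠ 0) : nextA f L m = nextA f L (m + 1) := by
  rw [nextA]; simp [hm, h]

lemma nextA_le : ∀ m : ℕ, nextA f L m ≤ L := by
  intro m
  by_cases hm : m < L
  · by_cases h : f m = 0
    · rw [nextA_hit hm h]; omega
    · rw [nextA_skip hm h]; exact nextA_le (m + 1)
  · rw [nextA_ge (Nat.not_lt.1 hm)]
termination_by m => L - m

lemma nextA_isA : ∀ m : ℕ, nextA f L m < L → f (nextA f L m) = 0 := by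
  intro m hlt
  by_cases hm : m < L
  · by_cases h : f m = 0
    · rwa [nextA_hit hm h]
    · rw [nextA_skip hm h] at hlt ⊢; exact nextA_isA (m + 1) hlt
  · rw [nextA_ge (Nat.not_lt.1 hm)] at hlt; omega
termination_by m => L - m

lemma val4_0 : (0 : Fin 4).val = 0 := rfl
lemma val4_1 : (1 : Fin 4).val = 1 := rfl
lemma val4_2 : (2 : Fin 4).val = 2 := rfl
lemma val4_3 : (3 : Fin 4).val = 3 := rfl

/-- The position of a half-edge: its vertex index, plus one for right-hand half-edges. -/
def hpos (q : Fin L × Fin 4) : ℕ := if q.2.val ≤ 1 then q.1.val else q.1.val + 1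

/-- The label of the circuit through a half-edge. -/
def lab (f : ℕ → Fin 3) (q : Fin L × Fin 4) : ℕ := nextA f L (hpos q)

section FinLemmas

variable [NeZero L]

lemma fin_add_one_eq_zero_iff {i : Fin L} : i + 1 = 0 ↔ i.val + 1 = L := by
  have hi := i.isLt
  by_cases hL1 : L = 1
  · subst hL1
    exact ⟨fun _ => by omega, fun _ => Subsingleton.elim _ _⟩
  · have hL2 : 2 ≤ L := by have := Nat.pos_of_ne_zero (NeZero.ne L); omega
    have h2 : 1 % L = 1 := Nat.mod_eq_of_lt (by omega)
    rw [Fin.ext_iff, Fin.add_def]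
    simp only [Fin.val_one', h2, Fin.val_zero]
    rcases Nat.lt_or_ge (i.val + 1) L with h' | h'
    · rw [Nat.mod_eq_of_lt h']; omega
    · have h'' : i.val + 1 = L := by omega
      rw [h'', Nat.mod_self]; omega

lemma fin_val_add_one {i : Fin L} (h : i + 1 ≠ 0) : (i + 1).val = i.val + 1 := by
  have hi := i.isLt
  have h' : i.val + 1 ≠ L := fun hh => h (fin_add_one_eq_zero_iff.2 hh)
  rw [Fin.add_def]
  simp only [Fin.val_one']
  have h1 : 1 % L = 1 % L := rfl
  rcases Nat.lt_or_ge 1 L with hL2 | hL2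
  · rw [Nat.mod_eq_of_lt hL2, Nat.mod_eq_of_lt (by omega)]
  · have := Nat.pos_of_ne_zero (NeZero.ne L); omega

lemma fin_val_sub_one {i : Fin L} (h : i ≠ 0) : (i - 1).val = i.val - 1 := by
  have hi := i.isLt
  have h0 : i.val ≠ 0 := fun hh => h (Fin.ext (by simpa using hh))
  rw [Fin.sub_def]
  simp only [Fin.val_one']
  have hL1 : 0 < L := Nat.pos_of_ne_zero (NeZero.ne L)
  by_cases hL2 : L = 1
  · omega
  · have h2 : 1 % L = 1 := Nat.mod_eq_of_lt (by omega)
    rw [h2]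
    show (L - 1 + i.val) % L = i.val - 1
    have he : L - 1 + i.val = L + (i.val - 1) := by omega
    rw [he, Nat.add_mod_left, Nat.mod_eq_of_lt (by omega)]

end FinLemmas

section Inv

variable (hL : 1 ≤ L)

lemma fin4_cases : ∀ j : Fin 4, j = 0 ∨ j = 1 ∨ j = 2 ∨ j = 3 := by decide
lemma fin3_cases : ∀ a : Fin 3, a = 0 ∨ a = 1 ∨ a = 2 := by decide

lemma pf_apply (f : ℕ → Fin 3) (q : Fin L × Fin 4) :
    (pf hL f).1 q = (q.1, m3 (f q.1.val) q.2) := rfl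

lemma lab_dstep {f : ℕ → Fin 3} {q q' : Fin L × Fin 4}
    (h : (chainGraph L hL true false).dstep (pf hL f) q q') : lab f q' = lab f q := by
  haveI : NeZero L := ⟨by omega⟩
  obtain ⟨i, j⟩ := q
  rcases h with h | h
  · rcases fin4_cases j with rfl | rfl | rfl | rfl
    · by_cases h0 : i = 0
      · rw [edg_00 hL h0] at h; subst h; rfl
      · rw [edg_01 hL h0] at h; subst h
        show nextA f L (hpos (i - 1, 2)) = nextA f L (hpos (i, 0))
        have h0' : i.val ≠ 0 := fun hh => h0 (Fin.ext (by simpa using hh))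
        simp only [hpos, fin_val_sub_one h0, val4_0, val4_1, val4_2, val4_3]
        norm_num
        congr 1
        omega
    · by_cases h0 : i = 0
      · rw [edg_10 hL h0] at h; subst h; rfl
      · rw [edg_11 hL h0] at h; subst h
        show nextA f L (hpos (i - 1, 3)) = nextA f L (hpos (i, 1))
        have h0' : i.val ≠ 0 := fun hh => h0 (Fin.ext (by simpa using hh))
        simp only [hpos, fin_val_sub_one h0, val4_0, val4_1, val4_2, val4_3]
        norm_num
        congr 1
        omega
    · by_cases h1 : i + 1 = 0
      · rw [edg_20 hL h1] at h; subst h; rfl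
      · rw [edg_21 hL h1] at h; subst h
        show nextA f L (hpos (i + 1, 0)) = nextA f L (hpos (i, 2))
        simp only [hpos, fin_val_add_one h1, val4_0, val4_1, val4_2, val4_3]
        norm_num
    · by_cases h1 : i + 1 = 0
      · rw [edg_30 hL h1] at h; subst h; rfl
      · rw [edg_31 hL h1] at h; subst h
        show nextA f L (hpos (i + 1, 1)) = nextA f L (hpos (i, 3))
        simp only [hpos, fin_val_add_one h1, val4_0, val4_1, val4_2, val4_3]
        norm_num
  · rw [pf_apply] at h
    subst h
    have hiL : i.val < L := i.isLt
    rcases fin3_cases (f i.val) with ha | ha | ha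
    · rw [ha]
      rcases fin4_cases j with rfl | rfl | rfl | rfl <;> rfl
    · have hne : f i.val ≠ 0 := by rw [ha]; decide
      rw [ha]
      rcases fin4_cases j with rfl | rfl | rfl | rfl <;>
        · show nextA f L _ = nextA f L _
          simp only [hpos, m3, Matrix.cons_val_zero, Matrix.cons_val_one, Matrix.head_cons, Matrix.cons_val,
            val4_0, val4_1, val4_2, val4_3]
          norm_num <;> rw [nextA_skip hiL hne]
    · have hne : f i.val ≠ 0 := by rw [ha]; decide
      rw [ha]
      rcases fin4_cases j with rfl | rfl | rfl | rfl <;>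
        · show nextA f L _ = nextA f L _
          simp only [hpos, m3, Matrix.cons_val_zero, Matrix.cons_val_one, Matrix.head_cons, Matrix.cons_val,
            val4_0, val4_1, val4_2, val4_3]
          norm_num <;> rw [nextA_skip hiL hne]

lemma lab_eqv {f : ℕ → Fin 3} {q q' : Fin L × Fin 4}
    (h : Relation.EqvGen ((chainGraph L hL true false).dstep (pf hL f)) q q') :
    lab f q = lab f q' := by
  induction h with
  | rel x y hxy => exact (lab_dstep hL hxy).symm
  | refl x => rfl
  | symm x y _ ih => exact ih.symm
  | trans x y z _ _ ih1 ih2 => exact ih1.trans ih2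

lemma external_iff {q : Fin L × Fin 4} :
    (chainGraph L hL true false).IsExternal q ↔ 2 ≤ q.2.val ∧ q.1.val + 1 = L := by
  haveI : NeZero L := ⟨by omega⟩
  obtain ⟨i, j⟩ := q
  show (chainGraph L hL true false).edg (i, j) = (i, j) ↔ _
  have hsnd : ∀ (p p' : Fin L × Fin 4), p = p' → p.2 = p'.2 := fun _ _ hh => congrArg Prod.snd hh
  rcases fin4_cases j with rfl | rfl | rfl | rfl
  · constructor
    · intro hh
      by_cases h0 : i = 0
      · rw [edg_00 hL h0] at hh; exact absurd (hsnd _ _ hh) (by decide : ¬ (1:Fin 4) = 0)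
      · rw [edg_01 hL h0] at hh; exact absurd (hsnd _ _ hh) (by decide : ¬ (2:Fin 4) = 0)
    · rintro ⟨hh, -⟩; rw [val4_0] at hh; omega
  · constructor
    · intro hh
      by_cases h0 : i = 0
      · rw [edg_10 hL h0] at hh; exact absurd (hsnd _ _ hh) (by decide : ¬ (0:Fin 4) = 1)
      · rw [edg_11 hL h0] at hh; exact absurd (hsnd _ _ hh) (by decide : ¬ (3:Fin 4) = 1)
    · rintro ⟨hh, -⟩; rw [val4_1] at hh; omega
  · constructor
    · intro hh
      by_cases h1 : i + 1 = 0
      · exact ⟨by rw [val4_2], fin_add_one_eq_zero_iff.1 h1⟩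
      · rw [edg_21 hL h1] at hh; exact absurd (hsnd _ _ hh) (by decide : ¬ (0:Fin 4) = 2)
    · rintro ⟨-, hh⟩
      exact edg_20 hL (fin_add_one_eq_zero_iff.2 hh)
  · constructor
    · intro hh
      by_cases h1 : i + 1 = 0
      · exact ⟨by rw [val4_3]; omega, fin_add_one_eq_zero_iff.1 h1⟩
      · rw [edg_31 hL h1] at hh; exact absurd (hsnd _ _ hh) (by decide : ¬ (1:Fin 4) = 3)
    · rintro ⟨-, hh⟩
      exact edg_30 hL (fin_add_one_eq_zero_iff.2 hh)

lemma lab_external {f : ℕ → Fin 3} {q : Fin L × Fin 4}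
    (hq : (chainGraph L hL true false).IsExternal q) : lab f q = L := by
  obtain ⟨h2, hpos'⟩ := (external_iff hL).1 hq
  have hh : hpos q = L := by
    simp only [hpos, if_neg (by omega : ¬ q.2.val ≤ 1)]
    omega
  rw [lab, hh, nextA_ge le_rfl]

end Inv

section Reach

variable (hL : 1 ≤ L) {f : ℕ → Fin 3}

lemma hpos0 {i : Fin L} : hpos (i, (0 : Fin 4)) = i.val := by simp [hpos, val4_0]
lemma hpos1 {i : Fin L} : hpos (i, (1 : Fin 4)) = i.val := by simp [hpos, val4_1]
lemma hpos2 {i : Fin L} : hpos (i, (2 : Fin 4)) = i.val + 1 := by simp [hpos, val4_2]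
lemma hpos3 {i : Fin L} : hpos (i, (3 : Fin 4)) = i.val + 1 := by simp [hpos, val4_3]

/-- The walk measure of a half-edge. -/
def meas (q : Fin L × Fin 4) : ℕ := 2 * q.1.val + (if 2 ≤ q.2.val then 1 else 0)

lemma meas0 {i : Fin L} : meas (i, (0 : Fin 4)) = 2 * i.val := by simp [meas, val4_0]
lemma meas1 {i : Fin L} : meas (i, (1 : Fin 4)) = 2 * i.val := by simp [meas, val4_1]
lemma meas2 {i : Fin L} : meas (i, (2 : Fin 4)) = 2 * i.val + 1 := by simp [meas, val4_2]
lemma meas3 {i : Fin L} : meas (i, (3 : Fin 4)) = 2 * i.val + 1 := by simp [meas, val4_3]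

lemma measm3 {i : Fin L} {a : Fin 3} (h : a ≠ 0) : meas (i, m3 a 0) = 2 * i.val + 1 ∧
    meas (i, m3 a 1) = 2 * i.val + 1 := by
  obtain ⟨h0, h1⟩ := m3_big a h
  have hle : (m3 a 0).val ≤ 3 := by omega
  constructor <;> · simp [meas]; omega

/-- Every half-edge reaches the canonical representative of its circuit. -/
lemma reach : ∀ n (q : Fin L × Fin 4), 2 * L - meas q ≤ n →
    ∃ q', Relation.EqvGen ((chainGraph L hL true false).dstep (pf hL f)) q q' ∧
      ((∃ hk : lab f q < L, q' = ((⟨lab f q, hk⟩ : Fin L), (0 : Fin 4))) ∨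
        (lab f q = L ∧ (chainGraph L hL true false).IsExternal q')) := by
  haveI : NeZero L := ⟨by omega⟩
  intro n
  induction n using Nat.strong_induction_on with
  | _ n ih =>
    rintro ⟨i, j⟩ hq
    have hiL : i.val < L := i.isLt
    rcases fin4_cases j with rfl | rfl | rfl | rfl
    · by_cases h0 : f i.val = 0
      · have hlabeq : lab f ((i : Fin L), (0 : Fin 4)) = i.val := by
          rw [lab, hpos0, nextA_hit hiL h0]
        refine ⟨(i, 0), Relation.EqvGen.refl _, Or.inl ⟨by rw [hlabeq]; exact hiL, ?_⟩⟩
        have : (⟨lab f ((i : Fin L), (0 : Fin 4)), by rw [hlabeq]; exact hiL⟩ : Fin L) = i :=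
          Fin.ext hlabeq
        rw [this]
      · have hstep : (chainGraph L hL true false).dstep (pf hL f) (i, 0) (i, m3 (f i.val) 0) :=
          Or.inr rfl
        have hm := (measm3 (i := i) h0).1
        have hn : 2 * L - meas (i, m3 (f i.val) 0) ≤ n - 1 := by
          rw [hm]; rw [meas0] at hq; omega
        have hn1 : 1 ≤ n := by rw [meas0] at hq; omega
        obtain ⟨q', hq', hres⟩ := ih (n - 1) (by omega) _ hn
        have hlabeq := lab_dstep hL hstep
        refine ⟨q', Relation.EqvGen.trans _ _ _ (Relation.EqvGen.rel _ _ hstep) hq', ?_⟩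
        rw [← hlabeq]
        exact hres
    · by_cases h0 : f i.val = 0
      · have hlabeq : lab f ((i : Fin L), (1 : Fin 4)) = i.val := by
          rw [lab, hpos1, nextA_hit hiL h0]
        have hstep : (chainGraph L hL true false).dstep (pf hL f) (i, 1) (i, 0) :=
          Or.inr (by rw [pf_apply, h0]; exact Prod.ext_iff.2 ⟨rfl, (by decide : m3 0 1 = 0)⟩)
        refine ⟨(i, 0), Relation.EqvGen.rel _ _ hstep, Or.inl ⟨by rw [hlabeq]; exact hiL, ?_⟩⟩
        have : (⟨lab f ((i : Fin L), (1 : Fin 4)), by rw [hlabeq]; exact hiL⟩ : Fin L) = i :=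
          Fin.ext hlabeq
        rw [this]
      · have hstep : (chainGraph L hL true false).dstep (pf hL f) (i, 1) (i, m3 (f i.val) 1) :=
          Or.inr rfl
        have hm := (measm3 (i := i) h0).2
        have hn : 2 * L - meas (i, m3 (f i.val) 1) ≤ n - 1 := by
          rw [hm]; rw [meas1] at hq; omega
        have hn1 : 1 ≤ n := by rw [meas1] at hq; omega
        obtain ⟨q', hq', hres⟩ := ih (n - 1) (by omega) _ hn
        have hlabeq := lab_dstep hL hstep
        refine ⟨q', Relation.EqvGen.trans _ _ _ (Relation.EqvGen.rel _ _ hstep) hq', ?_⟩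
        rw [← hlabeq]
        exact hres
    · by_cases h1 : i + 1 = 0
      · refine ⟨(i, 2), Relation.EqvGen.refl _, Or.inr ⟨?_, ?_⟩⟩
        · rw [lab, hpos2, fin_add_one_eq_zero_iff.1 h1, nextA_ge le_rfl]
        · exact (external_iff hL).2 ⟨by rw [val4_2], fin_add_one_eq_zero_iff.1 h1⟩
      · have hstep : (chainGraph L hL true false).dstep (pf hL f) (i, 2) (i + 1, 0) :=
          Or.inl (edg_21 hL h1)
        have hv := fin_val_add_one h1
        have hne : i.val + 1 ≠ L := fun hh => h1 (fin_add_one_eq_zero_iff.2 hh)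
        have hn : 2 * L - meas (i + 1, (0 : Fin 4)) ≤ n - 1 := by
          rw [meas0, hv]; rw [meas2] at hq; omega
        have hn1 : 1 ≤ n := by rw [meas2] at hq; omega
        obtain ⟨q', hq', hres⟩ := ih (n - 1) (by omega) _ hn
        have hlabeq := lab_dstep hL hstep
        refine ⟨q', Relation.EqvGen.trans _ _ _ (Relation.EqvGen.rel _ _ hstep) hq', ?_⟩
        rw [← hlabeq]
        exact hres
    · by_cases h1 : i + 1 = 0
      · refine ⟨(i, 3), Relation.EqvGen.refl _, Or.inr ⟨?_, ?_⟩⟩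
        · rw [lab, hpos3, fin_add_one_eq_zero_iff.1 h1, nextA_ge le_rfl]
        · exact (external_iff hL).2 ⟨by rw [val4_3]; omega, fin_add_one_eq_zero_iff.1 h1⟩
      · have hstep : (chainGraph L hL true false).dstep (pf hL f) (i, 3) (i + 1, 1) :=
          Or.inl (edg_31 hL h1)
        have hv := fin_val_add_one h1
        have hne : i.val + 1 ≠ L := fun hh => h1 (fin_add_one_eq_zero_iff.2 hh)
        have hn : 2 * L - meas (i + 1, (1 : Fin 4)) ≤ n - 1 := by
          rw [meas1, hv]; rw [meas3] at hq; omega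
        have hn1 : 1 ≤ n := by rw [meas3] at hq; omega
        obtain ⟨q', hq', hres⟩ := ih (n - 1) (by omega) _ hn
        have hlabeq := lab_dstep hL hstep
        refine ⟨q', Relation.EqvGen.trans _ _ _ (Relation.EqvGen.rel _ _ hstep) hq', ?_⟩
        rw [← hlabeq]
        exact hres

/-- The number of closed circuits of the decomposition `pf f` equals the number of
"reflect" vertices. -/
lemma ncircuits_pf (f : ℕ → Fin 3) :
    (chainGraph L hL true false).ncircuits (pf hL f) =
      ((Finset.univ : Finset (Fin L)).filter (fun i => f i.val = 0)).card := by
  haveI : NeZero L := ⟨by omega⟩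
  classical
  have closed : ∀ i : Fin L, f i.val = 0 →
      (chainGraph L hL true false).IsClosed (pf hL f)
        ((chainGraph L hL true false).circuitOf (pf hL f) (i, 0)) := by
    intro i hi h hc hext
    have h1 : lab f h = lab f ((i : Fin L), (0 : Fin 4)) := lab_eqv hL (Quotient.exact hc)
    rw [lab_external hL hext, lab, hpos0, nextA_hit i.isLt hi] at h1
    exact absurd h1.symm (Nat.ne_of_lt i.isLt)
  let e : {i : Fin L // f i.val = 0} →
      {c : (chainGraph L hL true false).Circuits (pf hL f) //
        (chainGraph L hL true false).IsClosed (pf hL f) c} :=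
    fun i => ⟨(chainGraph L hL true false).circuitOf (pf hL f) (i.1, 0), closed i.1 i.2⟩
  have hbij : Function.Bijective e := by
    constructor
    · rintro ⟨i, hi⟩ ⟨j, hj⟩ hij
      have h1 : lab f ((i : Fin L), (0 : Fin 4)) = lab f ((j : Fin L), (0 : Fin 4)) :=
        lab_eqv hL (Quotient.exact (congrArg Subtype.val hij))
      rw [lab, hpos0, nextA_hit i.isLt hi, lab, hpos0, nextA_hit j.isLt hj] at h1
      exact Subtype.ext (Fin.ext h1)
    · rintro ⟨c, hcl⟩
      obtain ⟨h, rfl⟩ : ∃ h, (chainGraph L hL true false).circuitOf (pf hL f) h = c :=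
        Quotient.exists_rep c
      obtain ⟨q', hq', hres⟩ := reach hL (2 * L) h (Nat.sub_le _ _)
      rcases hres with ⟨hk, rfl⟩ | ⟨hlabL, hext⟩
      · refine ⟨⟨⟨lab f h, hk⟩, nextA_isA _ hk⟩, ?_⟩
        exact Subtype.ext (Quotient.sound (Relation.EqvGen.symm _ _ hq'))
      · exact absurd hext (hcl q' (Quotient.sound (Relation.EqvGen.symm _ _ hq')))
  rw [HGraph.ncircuits, ← Nat.card_eq_of_bijective e hbij, Nat.card_eq_fintype_card,
    Fintype.card_subtype]

end Reach

section Final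

variable (hL : 1 ≤ L)

/-- Extend a vertex-indexed choice function to `ℕ`. -/
def FF (g : Fin L → Fin 3) : ℕ → Fin 3 := fun n => if h : n < L then g ⟨n, h⟩ else 0

lemma FF_val (g : Fin L → Fin 3) (i : Fin L) : FF g i.val = g i := by
  simp [FF, i.isLt]

lemma pf_bijective :
    Function.Bijective (fun g : Fin L → Fin 3 => pf hL (FF g)) := by
  constructor
  · intro g g' heq
    funext i
    have h1 := congrArg (fun d : (chainGraph L hL true false).Decomp =>
      d.1 ((i : Fin L), (0 : Fin 4))) heq
    simp only [pf_apply] at h1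
    have h2 := congrArg Prod.snd h1
    have h3 : m3 (FF g i.val) 0 = m3 (FF g' i.val) 0 := h2
    have := m3_inj0 _ _ h3
    rwa [FF_val, FF_val] at this
  · rintro ⟨p, hp1, hp2, hp3⟩
    refine ⟨fun i => decode3 ((p (i, 0)).2), ?_⟩
    apply Subtype.ext
    funext q
    obtain ⟨i, j⟩ := q
    have hfst : ∀ j : Fin 4, (p (i, j)).1 = i := fun j => hp3 (i, j)
    have hpσ : ∀ j : Fin 4, p (i, j) = (i, (p (i, j)).2) := fun j =>
      Prod.ext_iff.2 ⟨hfst j, rfl⟩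
    set σ : Fin 4 → Fin 4 := fun j => (p (i, j)).2 with hσ
    have hσinv : ∀ j, σ (σ j) = j := by
      intro j
      have h1 := hp1 (i, j)
      rw [hpσ j] at h1
      exact congrArg Prod.snd h1
    have hσne : ∀ j, σ j ≠ j := by
      intro j hj
      exact hp2 (i, j) ((hpσ j).trans (congrArg (Prod.mk i) hj))
    show (pf hL (FF fun i => decode3 ((p (i, 0)).2))).1 (i, j) = p (i, j)
    rw [pf_apply, hpσ j]
    have hFF : FF (fun i : Fin L => decode3 ((p (i, 0)).2)) i.val = decode3 (σ 0) :=
      FF_val _ i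
    show ((i : Fin L), m3 (FF (fun i : Fin L => decode3 ((p (i, 0)).2)) i.val) j) = (i, σ j)
    rw [hFF, ← invol_eq_m3 σ hσinv hσne j]

end Final

end Bub

/-- For every `L ≥ 1`, the propagator-type graph `B_L` — a chain of
`L` four-valent vertices with consecutive vertices joined by double edges, a
self-loop at one end vertex and two external half-edges at the other end (a chain
of `L-1` one-loop fish bubbles terminated by a tadpole) — has circuit partition
polynomial `J(B_L, N) = (N+2)^L`. -/
theorem bubble_tadpole_circuit_partition (L : ℕ) (hL : 1 ≤ L) :
    (chainGraph L hL true false).J =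
      (Polynomial.X + Polynomial.C (2 : ℤ)) ^ L := by
  classical
  have h1 : (∑ d : (chainGraph L hL true false).Decomp,
        (Polynomial.X : Polynomial ℤ) ^ (chainGraph L hL true false).ncircuits d)
      = ∑ g : Fin L → Fin 3, (Polynomial.X : Polynomial ℤ) ^
          ((Finset.univ : Finset (Fin L)).filter (fun i => g i = 0)).card := by
    refine (Fintype.sum_bijective (fun g : Fin L → Fin 3 => Bub.pf hL (Bub.FF g))
      (Bub.pf_bijective hL) _ _ (fun g => ?_)).symm
    rw [Bub.ncircuits_pf hL (Bub.FF g)]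
    congr 2
    exact Finset.filter_congr (fun i _ => by rw [Bub.FF_val])
  rw [HGraph.J, h1]
  have key : ∀ g : Fin L → Fin 3, (Polynomial.X : Polynomial ℤ) ^
        ((Finset.univ : Finset (Fin L)).filter (fun i => g i = 0)).card
      = ∏ i : Fin L, (if g i = 0 then (Polynomial.X : Polynomial ℤ) else 1) := by
    intro g
    rw [Finset.prod_ite, Finset.prod_const, Finset.prod_const, one_pow, mul_one]
  simp_rw [key]
  rw [← Fintype.prod_sum (fun (_ : Fin L) (a : Fin 3) =>
    if a = 0 then (Polynomial.X : Polynomial ℤ) else 1)]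
  rw [Finset.prod_const, Finset.card_univ, Fintype.card_fin]
  congr 1
  rw [Fin.sum_univ_three]
  norm_num
  rw [if_neg (by decide : ¬ (2 : Fin 3) = 0)]
  ring
end

section
/- For every integer L ≥ 2, let V_L be the vacuum graph with L loops consisting of L−1 four-valent vertices arranged in a path, with consecutive vertices joined by double edges and a self-loop at each end vertex (for L = 2 this is a single vertex carrying two self-loops). Then the circuit partition polynomial satisfies J(V_L, N) = N·(N+2)^{L−1}. -/
namespace BubbleAux

/-- the three perfect matchings of `{0,1,2,3}` as involutions -/
def mtch : Fin 3 → Fin 4 → Fin 4 := ![![1,0,3,2], ![2,3,0,1], ![3,2,1,0]]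

lemma mtch_invol : ∀ c j, mtch c (mtch c j) = j := by decide
lemma mtch_ne : ∀ c j, mtch c j ≠ j := by decide

def dec4 : Fin 4 → Fin 3 := ![0,0,1,2]

set_option maxRecDepth 4000 in
lemma mtch_determined : ∀ g : Fin 4 → Fin 4,
    (∀ j, g (g j) = j) → (∀ j, g j ≠ j) → g = mtch (dec4 (g 0)) := by decide

section
variable {n : ℕ} (hn : 1 ≤ n) (f : Fin n → Fin 3)

/-- the decomposition associated to a choice of matching at each vertex -/
def bDecomp : (chainGraph n hn true true).Decomp :=
  ⟨fun q => (q.1, mtch (f q.1) q.2), by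
    refine ⟨fun h => ?_, fun h => ?_, fun h => rfl⟩
    · show (h.1, mtch (f h.1) (mtch (f h.1) h.2)) = h
      rw [mtch_invol]; rfl
    · intro hh
      exact mtch_ne (f h.1) h.2 (congrArg Prod.snd hh)⟩

lemma bDecomp_apply (q : Fin n × Fin 4) : (bDecomp hn f).1 q = (q.1, mtch (f q.1) q.2) := rfl

def bDecode (d : (chainGraph n hn true true).Decomp) : Fin n → Fin 3 :=
  fun i => dec4 (d.1 (i, 0)).2

/-- decompositions correspond to matchings at each vertex -/
def decompEquiv : (Fin n → Fin 3) ≃ (chainGraph n hn true true).Decomp where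
  toFun := bDecomp hn
  invFun := bDecode hn
  left_inv := by
    intro f
    funext i
    show dec4 (mtch (f i) 0) = f i
    revert i
    intro i
    have : ∀ c : Fin 3, dec4 (mtch c 0) = c := by decide
    exact this (f i)
  right_inv := by
    intro d
    obtain ⟨p, hinv, hne, hvtx⟩ := d
    apply Subtype.ext
    funext q
    obtain ⟨i, j⟩ := q
    have h1 : ∀ j : Fin 4, p (i, j) = (i, (p (i,j)).2) := by
      intro j; exact Prod.ext (show (p (i,j)).1 = i from hvtx (i, j)) rfl
    set g : Fin 4 → Fin 4 := fun j => (p (i, j)).2 with hg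
    have hginv : ∀ j, g (g j) = j := by
      intro j
      have : p (p (i,j)) = (i,j) := hinv (i,j)
      rw [h1 j] at this
      exact congrArg Prod.snd this
    have hgne : ∀ j, g j ≠ j := by
      intro j hj
      refine hne (i,j) ((h1 j).trans ?_)
      exact congrArg (Prod.mk i) hj
    have := mtch_determined g hginv hgne
    show (i, mtch (bDecode hn ⟨p, hinv, hne, hvtx⟩ i) j) = p (i, j)
    rw [h1 j]
    show (i, mtch (dec4 (p (i,0)).2) j) = (i, g j)
    rw [this]

end
end BubbleAux
namespace BubbleAux

lemma fin3_cases (c : Fin 3) : c = 0 ∨ c = 1 ∨ c = 2 := by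
  exact (by decide : ∀ c : Fin 3, c = 0 ∨ c = 1 ∨ c = 2) c

lemma fin4_cases (j : Fin 4) : j = 0 ∨ j = 1 ∨ j = 2 ∨ j = 3 := by
  exact (by decide : ∀ j : Fin 4, j = 0 ∨ j = 1 ∨ j = 2 ∨ j = 3) j

section
variable {n : ℕ} [NeZero n] (hn : 1 ≤ n) (f : Fin n → Fin 3)

lemma add_one_eq_zero_iff (i : Fin n) : i + 1 = 0 ↔ i.val + 1 = n := by
  obtain ⟨m, rfl⟩ : ∃ m, n = m + 1 := ⟨n - 1, by have := NeZero.ne n; omega⟩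
  constructor
  · intro h
    have h0 : (i + 1).val = 0 := by rw [h]; rfl
    rw [Fin.val_add_one] at h0
    split at h0
    · next he => rw [he]; rfl
    · omega
  · intro h
    have he : i = Fin.last m := Fin.ext (by simpa using Nat.succ_injective h)
    apply Fin.ext
    rw [Fin.val_add_one, if_pos he]; rfl

lemma val_add_one (i : Fin n) (h : i.val + 1 < n) : (i + 1).val = i.val + 1 := by
  obtain ⟨m, rfl⟩ : ∃ m, n = m + 1 := ⟨n - 1, by have := NeZero.ne n; omega⟩
  rw [Fin.val_add_one]
  split
  · next he => subst he; simp [Fin.last] at h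
  · rfl

lemma eq_zero_iff_val (i : Fin n) : i = 0 ↔ i.val = 0 := by
  rw [Fin.ext_iff, Fin.val_zero]

lemma val_sub_one (i : Fin n) (h : i ≠ 0) : (i - 1).val = i.val - 1 := by
  obtain ⟨m, rfl⟩ : ∃ m, n = m + 1 := ⟨n - 1, by have := NeZero.ne n; omega⟩
  rw [Fin.coe_sub_one, if_neg h]

lemma edg0 (i : Fin n) :
    (chainGraph n hn true true).edg (i, 0) = if i = 0 then (i, 1) else (i - 1, 2) := rfl

lemma edg1 (i : Fin n) :
    (chainGraph n hn true true).edg (i, 1) = if i = 0 then (i, 0) else (i - 1, 3) := rfl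

lemma edg2 (i : Fin n) :
    (chainGraph n hn true true).edg (i, 2) = if i + 1 = 0 then (i, 3) else (i + 1, 0) := rfl

lemma edg3 (i : Fin n) :
    (chainGraph n hn true true).edg (i, 3) = if i + 1 = 0 then (i, 2) else (i + 1, 1) := rfl

/-- number of `A`-vertices (pairing `{01},{23}`) among the first `m` vertices -/
def cb (m : ℕ) : ℕ := (Finset.univ.filter (fun i : Fin n => i.val < m ∧ f i = 0)).card

omit [NeZero n] in
lemma cb_mono {m m' : ℕ} (h : m ≤ m') : cb f m ≤ cb f m' := by
  apply Finset.card_le_card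
  intro i hi
  simp only [Finset.mem_filter] at *
  exact ⟨hi.1, hi.2.1.trans_le h, hi.2.2⟩

lemma cb_succ (i : Fin n) : cb f (i.val + 1) = cb f i.val + (if f i = 0 then 1 else 0) := by
  by_cases hfi : f i = 0
  · rw [if_pos hfi]
    have : Finset.univ.filter (fun i' : Fin n => i'.val < i.val + 1 ∧ f i' = 0)
        = insert i (Finset.univ.filter (fun i' : Fin n => i'.val < i.val ∧ f i' = 0)) := by
      ext i'
      simp only [Finset.mem_filter, Finset.mem_insert, Finset.mem_univ, true_and]
      constructor
      · rintro ⟨h1, h2⟩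
        rcases Nat.lt_succ_iff_lt_or_eq.1 h1 with h | h
        · exact Or.inr ⟨h, h2⟩
        · exact Or.inl (Fin.ext h)
      · rintro (rfl | ⟨h1, h2⟩)
        · exact ⟨Nat.lt_succ_self _, hfi⟩
        · exact ⟨h1.trans (Nat.lt_succ_self _), h2⟩
    rw [cb, cb, this, Finset.card_insert_of_notMem (by simp)]
  · rw [if_neg hfi]
    have hset : Finset.univ.filter (fun i' : Fin n => i'.val < i.val + 1 ∧ f i' = 0)
        = Finset.univ.filter (fun i' : Fin n => i'.val < i.val ∧ f i' = 0) := by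
      ext i'
      simp only [Finset.mem_filter, Finset.mem_univ, true_and]
      constructor
      · rintro ⟨h1, h2⟩
        refine ⟨?_, h2⟩
        rcases Nat.lt_succ_iff_lt_or_eq.1 h1 with h | h
        · exact h
        · exact absurd h2 (by rw [Fin.ext h]; exact hfi)
      · rintro ⟨h1, h2⟩
        exact ⟨h1.trans (Nat.lt_succ_self _), h2⟩
    rw [cb, cb, hset, Nat.add_zero]

/-- the segment label of a half-edge -/
def seg (q : Fin n × Fin 4) : ℕ :=
  cb f q.1.val + (if f q.1 = 0 ∧ 2 ≤ q.2.val then 1 else 0)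

end
end BubbleAux
namespace BubbleAux
section
variable {n : ℕ} [NeZero n] (hn : 1 ≤ n) (f : Fin n → Fin 3)

/-- the circuit relation of the decomposition `bDecomp f` -/
def Rel : (Fin n × Fin 4) → (Fin n × Fin 4) → Prop :=
  Relation.EqvGen ((chainGraph n hn true true).dstep (bDecomp hn f))

lemma rel_refl (h : Fin n × Fin 4) : Rel hn f h h := Relation.EqvGen.refl h

lemma rel_symm {h h'} (hr : Rel hn f h h') : Rel hn f h' h := Relation.EqvGen.symm _ _ hr

lemma rel_trans {h h' h''} (h1 : Rel hn f h h') (h2 : Rel hn f h' h'') : Rel hn f h h'' :=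
  Relation.EqvGen.trans _ _ _ h1 h2

lemma rel_edg (h : Fin n × Fin 4) : Rel hn f h ((chainGraph n hn true true).edg h) :=
  Relation.EqvGen.rel _ _ (Or.inl rfl)

lemma rel_pair (i : Fin n) (j : Fin 4) : Rel hn f (i, j) (i, mtch (f i) j) :=
  Relation.EqvGen.rel _ _ (Or.inr rfl)

lemma vertStep (i : Fin n) (h01 : Rel hn f (i,0) (i,1)) : Rel hn f (i,2) (i,3) := by
  rcases fin3_cases (f i) with hfi | hfi | hfi
  · have h2 := rel_pair hn f i 2
    rw [hfi] at h2
    exact h2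
  · have h2 := rel_pair hn f i 2
    have h3 := rel_pair hn f i 3
    rw [hfi] at h2 h3
    exact rel_trans hn f h2 (rel_trans hn f h01 (rel_symm hn f h3))
  · have h2 := rel_pair hn f i 2
    have h3 := rel_pair hn f i 3
    rw [hfi] at h2 h3
    exact rel_trans hn f h2 (rel_trans hn f (rel_symm hn f h01) (rel_symm hn f h3))

lemma conn_aux : ∀ m : ℕ, ∀ i : Fin n, i.val = m →
    Rel hn f (i,0) (i,1) ∧ Rel hn f (i,2) (i,3) := by
  intro m
  induction m with
  | zero =>
    intro i hi
    have hi0 : i = 0 := (eq_zero_iff_val i).2 hi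
    have h01 : Rel hn f (i,0) (i,1) := by
      have := rel_edg hn f (i, 0)
      rwa [edg0 hn i, if_pos hi0] at this
    exact ⟨h01, vertStep hn f i h01⟩
  | succ m ih =>
    intro i hi
    have hi0 : i ≠ 0 := by
      intro h
      rw [(eq_zero_iff_val i).1 h] at hi
      omega
    have hsub : (i - 1).val = m := by rw [val_sub_one i hi0, hi]; omega
    have h23 := (ih (i - 1) hsub).2
    have e0 : Rel hn f (i,0) (i-1,2) := by
      have := rel_edg hn f (i, 0)
      rwa [edg0 hn i, if_neg hi0] at this
    have e1 : Rel hn f (i,1) (i-1,3) := by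
      have := rel_edg hn f (i, 1)
      rwa [edg1 hn i, if_neg hi0] at this
    have h01 : Rel hn f (i,0) (i,1) :=
      rel_trans hn f e0 (rel_trans hn f h23 (rel_symm hn f e1))
    exact ⟨h01, vertStep hn f i h01⟩

lemma conn01 (i : Fin n) : Rel hn f (i,0) (i,1) := (conn_aux hn f i.val i rfl).1
lemma conn23 (i : Fin n) : Rel hn f (i,2) (i,3) := (conn_aux hn f i.val i rfl).2

lemma allConn (i : Fin n) (hfi : f i ≠ 0) (j j' : Fin 4) : Rel hn f (i,j) (i,j') := by
  have h02 : Rel hn f (i,0) (i,2) := by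
    rcases fin3_cases (f i) with h | h | h
    · exact absurd h hfi
    · have := rel_pair hn f i 0
      rw [h] at this
      exact this
    · have := rel_pair hn f i 0
      rw [h] at this
      exact rel_trans hn f this (rel_symm hn f (conn23 hn f i))
  have rel0 : ∀ j : Fin 4, Rel hn f (i,0) (i,j) := by
    intro j
    rcases fin4_cases j with rfl | rfl | rfl | rfl
    · exact rel_refl hn f _
    · exact conn01 hn f i
    · exact h02
    · exact rel_trans hn f h02 (conn23 hn f i)
  exact rel_trans hn f (rel_symm hn f (rel0 j)) (rel0 j')

lemma seg_step {h h' : Fin n × Fin 4}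
    (hd : (chainGraph n hn true true).dstep (bDecomp hn f) h h') :
    seg f h = seg f h' := by
  obtain ⟨i, j⟩ := h
  rcases hd with he | hp
  · -- edge step
    rcases fin4_cases j with rfl | rfl | rfl | rfl
    · rw [edg0 hn i] at he
      by_cases hi0 : i = 0
      · rw [if_pos hi0] at he
        subst he
        simp [seg]
      · rw [if_neg hi0] at he
        subst he
        have h1 : (i-1).val = i.val - 1 := val_sub_one i hi0
        have h2 := cb_succ f (i - 1)
        have h3 : i.val ≠ 0 := fun hv => hi0 ((eq_zero_iff_val i).2 hv)
        rw [h1] at h2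
        have h4 : i.val - 1 + 1 = i.val := by omega
        rw [h4] at h2
        simp only [seg, h1]
        have e0 : ((0 : Fin 4)).val = 0 := rfl
        have e2 : ((2 : Fin 4)).val = 2 := rfl
        rw [e0, e2]
        split_ifs at h2 ⊢ <;> omega
    · rw [edg1 hn i] at he
      by_cases hi0 : i = 0
      · rw [if_pos hi0] at he
        subst he
        simp [seg]
      · rw [if_neg hi0] at he
        subst he
        have h1 : (i-1).val = i.val - 1 := val_sub_one i hi0
        have h2 := cb_succ f (i - 1)
        have h3 : i.val ≠ 0 := fun hv => hi0 ((eq_zero_iff_val i).2 hv)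
        rw [h1] at h2
        have h4 : i.val - 1 + 1 = i.val := by omega
        rw [h4] at h2
        simp only [seg, h1]
        have e0 : ((1 : Fin 4)).val = 1 := rfl
        have e2 : ((3 : Fin 4)).val = 3 := rfl
        rw [e0, e2]
        split_ifs at h2 ⊢ <;> omega
    · rw [edg2 hn i] at he
      by_cases hil : i + 1 = 0
      · rw [if_pos hil] at he
        subst he
        simp [seg, show ((2:Fin 4)).val = 2 from rfl, show ((3:Fin 4)).val = 3 from rfl]
      · rw [if_neg hil] at he
        subst he
        have hlt : i.val + 1 < n := by
          have := i.isLt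
          have := (not_iff_not.2 (add_one_eq_zero_iff i)).1 hil
          omega
        have h1 : (i+1).val = i.val + 1 := val_add_one i hlt
        have h2 := cb_succ f i
        simp only [seg, h1]
        have e0 : ((0 : Fin 4)).val = 0 := rfl
        have e2 : ((2 : Fin 4)).val = 2 := rfl
        rw [e0, e2, h2]
        split_ifs <;> omega
    · rw [edg3 hn i] at he
      by_cases hil : i + 1 = 0
      · rw [if_pos hil] at he
        subst he
        simp [seg, show ((2:Fin 4)).val = 2 from rfl, show ((3:Fin 4)).val = 3 from rfl]
      · rw [if_neg hil] at he
        subst he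
        have hlt : i.val + 1 < n := by
          have := i.isLt
          have := (not_iff_not.2 (add_one_eq_zero_iff i)).1 hil
          omega
        have h1 : (i+1).val = i.val + 1 := val_add_one i hlt
        have h2 := cb_succ f i
        simp only [seg, h1]
        have e0 : ((1 : Fin 4)).val = 1 := rfl
        have e2 : ((3 : Fin 4)).val = 3 := rfl
        rw [e0, e2, h2]
        split_ifs <;> omega
  · -- pairing step
    have : h' = (i, mtch (f i) j) := hp.symm
    subst this
    by_cases hfi : f i = 0
    · have hm : mtch (f i) = ![1,0,3,2] := by rw [hfi]; rfl
      rcases fin4_cases j with rfl | rfl | rfl | rfl <;>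
        simp [seg, hfi, show mtch 0 0 = 1 from rfl, show mtch 0 1 = 0 from rfl,
          show mtch 0 2 = 3 from rfl, show mtch 0 3 = 2 from rfl,
          show ((0:Fin 4)).val = 0 from rfl, show ((1:Fin 4)).val = 1 from rfl,
          show ((2:Fin 4)).val = 2 from rfl, show ((3:Fin 4)).val = 3 from rfl]
    · simp [seg, hfi]

lemma seg_rel {h h' : Fin n × Fin 4} (hr : Rel hn f h h') : seg f h = seg f h' := by
  induction hr with
  | rel _ _ hd => exact seg_step hn f hd
  | refl _ => rfl
  | symm _ _ _ ih => exact ih.symm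
  | trans _ _ _ _ _ ih1 ih2 => exact ih1.trans ih2

end
end BubbleAux
namespace BubbleAux
section
variable {n : ℕ} [NeZero n] (hn : 1 ≤ n) (f : Fin n → Fin 3)

lemma sameVertexRel (i : Fin n) (j j' : Fin 4)
    (hseg : seg f (i,j) = seg f (i,j')) : Rel hn f (i,j) (i,j') := by
  by_cases hfi : f i = 0
  · rcases fin4_cases j with rfl|rfl|rfl|rfl <;> rcases fin4_cases j' with rfl|rfl|rfl|rfl <;>
      simp only [seg, hfi, true_and, show ((0:Fin 4)).val = 0 from rfl,
        show ((1:Fin 4)).val = 1 from rfl, show ((2:Fin 4)).val = 2 from rfl,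
        show ((3:Fin 4)).val = 3 from rfl] at hseg <;>
      (try norm_num at hseg) <;>
      first
        | exact rel_refl hn f _
        | exact conn01 hn f i
        | exact rel_symm hn f (conn01 hn f i)
        | exact conn23 hn f i
        | exact rel_symm hn f (conn23 hn f i)
        | omega
  · exact allConn hn f i hfi j j'

lemma seg_le_succ (i : Fin n) (j : Fin 4) : seg f (i, j) ≤ cb f (i.val + 1) := by
  rw [cb_succ]
  by_cases hQ : f i = 0
  · simp only [seg, if_pos hQ]
    split_ifs <;> omega
  · simp only [seg, if_neg hQ, if_neg (fun hP => hQ (And.left hP))]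
    omega

lemma descend : ∀ m : ℕ, ∀ i' i : Fin n, ∀ j j' : Fin 4, i'.val = m → i.val ≤ i'.val →
    seg f (i,j) = seg f (i',j') → Rel hn f (i,j) (i',j') := by
  intro m
  induction m with
  | zero =>
    intro i' i j j' hm hle hseg
    have : i = i' := Fin.ext (by omega)
    subst this
    exact sameVertexRel hn f i j j' hseg
  | succ m ih =>
    intro i' i j j' hm hle hseg
    by_cases heq : i.val = i'.val
    · have : i = i' := Fin.ext heq
      subst this
      exact sameVertexRel hn f i j j' hseg
    · have hlt : i.val < i'.val := by omega
      have hi0 : i' ≠ 0 := by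
        intro h
        rw [(eq_zero_iff_val i').1 h] at hm
        omega
      -- the indicator of (i', j') vanishes
      have hind : ¬ (f i' = 0 ∧ 2 ≤ j'.val) := by
        intro hP
        have h1 : seg f (i', j') = cb f i'.val + 1 := by
          simp only [seg, if_pos hP]
        have h2 : seg f (i,j) ≤ cb f (i.val + 1) := seg_le_succ f i j
        have h3 : cb f (i.val + 1) ≤ cb f i'.val := cb_mono f (by omega)
        omega
      have hz : seg f (i', j') = cb f i'.val := by
        simp only [seg, if_neg hind, Nat.add_zero]
      have hz0 : seg f (i', (0 : Fin 4)) = cb f i'.val := by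
        simp only [seg, show ((0:Fin 4)).val = 0 from rfl]
        norm_num
      have r0 : Rel hn f (i', 0) (i', j') :=
        sameVertexRel hn f i' 0 j' (by rw [hz, hz0])
      have r1 : Rel hn f (i', 0) (i'-1, 2) := by
        have := rel_edg hn f (i', 0)
        rwa [edg0 hn i', if_neg hi0] at this
      have hsub : (i' - 1).val = m := by rw [val_sub_one i' hi0]; omega
      have hseg2 : seg f (i, j) = seg f (i'-1, 2) := by
        rw [hseg, hz, ← hz0]
        exact seg_rel hn f r1
      have rih : Rel hn f (i, j) (i'-1, 2) :=
        ih (i'-1) i j 2 hsub (by omega) hseg2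
      exact rel_trans hn f rih (rel_trans hn f (rel_symm hn f r1) r0)

lemma seg_inj {q q' : Fin n × Fin 4} (hseg : seg f q = seg f q') : Rel hn f q q' := by
  obtain ⟨i, j⟩ := q
  obtain ⟨i', j'⟩ := q'
  rcases le_total i.val i'.val with h | h
  · exact descend hn f i'.val i' i j j' rfl h hseg
  · exact rel_symm hn f (descend hn f i.val i i' j' j rfl h hseg.symm)

lemma seg_le (q : Fin n × Fin 4) : seg f q ≤ cb f n := by
  obtain ⟨i, j⟩ := q
  exact (seg_le_succ f i j).trans (cb_mono f i.isLt)

lemma exists_seg_aux : ∀ m : ℕ, m ≤ n → ∀ s : ℕ, s ≤ cb f m → ∃ q, seg f q = s := by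
  have hpos : 0 < n := Nat.pos_of_ne_zero (NeZero.ne n)
  intro m
  induction m with
  | zero =>
    intro _ s hs
    have hc0 : cb f 0 = 0 := by simp [cb]
    rw [hc0, Nat.le_zero] at hs
    subst hs
    refine ⟨(⟨0, hpos⟩, 0), ?_⟩
    simp only [seg, show ((0:Fin 4)).val = 0 from rfl]
    rw [hc0]
    norm_num
  | succ m ih =>
    intro hm s hs
    set i : Fin n := ⟨m, by omega⟩ with hi
    have hiv : i.val = m := rfl
    have hcb := cb_succ f i
    rw [hiv] at hcb
    by_cases hsm : s ≤ cb f m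
    · exact ih (by omega) s hsm
    · have hfi : f i = 0 := by
        by_contra hne
        rw [if_neg hne] at hcb
        omega
      rw [if_pos hfi] at hcb
      refine ⟨(i, 2), ?_⟩
      have h22 : (2:ℕ) ≤ ((2:Fin 4)).val := by decide
      simp only [seg, hiv, if_pos (And.intro hfi h22)]
      omega

lemma no_ext (q : Fin n × Fin 4) : ¬ (chainGraph n hn true true).IsExternal q := by
  obtain ⟨i, j⟩ := q
  intro h
  change (chainGraph n hn true true).edg (i, j) = (i, j) at h
  rcases fin4_cases j with rfl|rfl|rfl|rfl
  · rw [edg0 hn i] at h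
    split_ifs at h <;> simpa using congrArg Prod.snd h
  · rw [edg1 hn i] at h
    split_ifs at h <;> simpa using congrArg Prod.snd h
  · rw [edg2 hn i] at h
    split_ifs at h <;> simpa using congrArg Prod.snd h
  · rw [edg3 hn i] at h
    split_ifs at h <;> simpa using congrArg Prod.snd h

lemma ncircuits_eq :
    (chainGraph n hn true true).ncircuits (bDecomp hn f) = cb f n + 1 := by
  set G := chainGraph n hn true true
  set d := bDecomp hn f
  have closed_all : ∀ c : G.Circuits d, G.IsClosed d c := fun c q _ => no_ext hn q
  have e1 : {c : G.Circuits d // G.IsClosed d c} ≃ G.Circuits d :=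
    Equiv.subtypeUnivEquiv closed_all
  let F : G.Circuits d → Fin (cb f n + 1) :=
    Quotient.lift (fun q : Fin n × Fin 4 => (⟨seg f q, by have := seg_le f q; omega⟩ : Fin (cb f n + 1)))
      (fun a b hab => Fin.ext (seg_rel hn f hab))
  have hF : Function.Bijective F := by
    constructor
    · intro c c'
      induction c using Quotient.inductionOn with | _ a =>
      induction c' using Quotient.inductionOn with | _ b =>
      intro hab
      have : seg f a = seg f b := congrArg Fin.val hab
      exact Quotient.sound (seg_inj hn f this)
    · intro s
      obtain ⟨q, hq⟩ := exists_seg_aux f n le_rfl s.val (by have := s.isLt; omega)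
      exact ⟨Quotient.mk _ q, Fin.ext hq⟩
  rw [HGraph.ncircuits, Nat.card_congr e1, Nat.card_eq_of_bijective F hF,
    Nat.card_eq_fintype_card, Fintype.card_fin]

end
end BubbleAux
namespace BubbleAux

lemma sum_fin3 : (∑ c : Fin 3, (if c = 0 then (Polynomial.X : Polynomial ℤ) else 1))
    = Polynomial.X + Polynomial.C 2 := by
  rw [Fin.sum_univ_three, if_pos rfl, if_neg (by decide : ¬ (1:Fin 3) = 0),
    if_neg (by decide : ¬ (2:Fin 3) = 0), show (Polynomial.C (2:ℤ)) = 2 from map_ofNat _ 2]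
  ring

lemma chainJ (n : ℕ) (hn : 1 ≤ n) :
    (chainGraph n hn true true).J
      = Polynomial.X * (Polynomial.X + Polynomial.C (2:ℤ)) ^ n := by
  haveI : NeZero n := ⟨by omega⟩
  rw [HGraph.J]
  rw [← Equiv.sum_comp (decompEquiv hn)
    (fun d => (Polynomial.X : Polynomial ℤ) ^ (chainGraph n hn true true).ncircuits d)]
  have key : ∀ f : Fin n → Fin 3,
      (chainGraph n hn true true).ncircuits (decompEquiv hn f) = cb f n + 1 :=
    fun f => ncircuits_eq hn f
  simp only [key]
  have hcb : ∀ f : Fin n → Fin 3,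
      cb f n = (Finset.univ.filter (fun i => f i = 0)).card := by
    intro f
    apply congrArg Finset.card
    apply Finset.filter_congr
    intro i _
    simp [i.isLt]
  have hterm : ∀ f : Fin n → Fin 3, (Polynomial.X : Polynomial ℤ) ^ (cb f n + 1)
      = Polynomial.X * ∏ i, (if f i = 0 then (Polynomial.X : Polynomial ℤ) else 1) := by
    intro f
    rw [pow_succ, mul_comm, hcb f]
    congr 1
    rw [Finset.prod_ite, Finset.prod_const, Finset.prod_const_one, mul_one]
  simp only [hterm]
  rw [← Finset.mul_sum]
  congr 1
  have hps := Finset.prod_univ_sum (fun _ : Fin n => (Finset.univ : Finset (Fin 3)))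
      (fun _ c => if c = 0 then (Polynomial.X : Polynomial ℤ) else 1)
  rw [Fintype.piFinset_univ] at hps
  rw [← hps, sum_fin3, Finset.prod_const, Finset.card_univ, Fintype.card_fin]

end BubbleAux
/-- For every `L ≥ 2`, the vacuum graph `V_L` — a chain of `L-1`
four-valent vertices with consecutive vertices joined by double edges and a
self-loop at each end vertex (for `L = 2` a single vertex with two self-loops) —
has circuit partition polynomial `J(V_L, N) = N·(N+2)^(L-1)`. -/
theorem bubble_vacuum_circuit_partition (L : ℕ) (hL : 2 ≤ L) :
    (chainGraph (L - 1) (by omega) true true).J =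
      Polynomial.X * (Polynomial.X + Polynomial.C (2 : ℤ)) ^ (L - 1) := by
  exact BubbleAux.chainJ (L - 1) _
end

section
/- For every integer L ≥ 1, let C_L be the vertex-type graph with L loops consisting of L+1 four-valent vertices arranged in a path, with consecutive vertices joined by double edges and two external half-edges at each of the two end vertices (a chain of L fish graphs, open at both ends). Then the circuit partition polynomial satisfies N·J(C_L, N) = (N−1)·2^{L+1} + (N+2)^{L+1}. -/
section ChainLemmas

variable {n : ℕ} [NeZero n] (hn : 1 ≤ n) (i : Fin n)

lemma cg_edg0 : (chainGraph n hn false false).edg (i, 0) =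
    if i = 0 then (i, 0) else (i - 1, 2) := rfl

lemma cg_edg1 : (chainGraph n hn false false).edg (i, 1) =
    if i = 0 then (i, 1) else (i - 1, 3) := rfl

lemma cg_edg2 : (chainGraph n hn false false).edg (i, 2) =
    if i + 1 = 0 then (i, 2) else (i + 1, 0) := rfl

lemma cg_edg3 : (chainGraph n hn false false).edg (i, 3) =
    if i + 1 = 0 then (i, 3) else (i + 1, 1) := rfl

lemma cg_vtx (h : Fin n × Fin 4) : (chainGraph n hn false false).vtx h = h.1 := rfl

end ChainLemmas

/-- The three fixed-point-free involutions of `Fin 4`. -/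
def tbl : Fin 3 → Fin 4 → Fin 4 := ![![1,0,3,2], ![2,3,0,1], ![3,2,1,0]]

lemma tbl_invol : ∀ (a : Fin 3) (j : Fin 4), tbl a (tbl a j) = j := by decide

lemma tbl_ne : ∀ (a : Fin 3) (j : Fin 4), tbl a j ≠ j := by decide

lemma fin4_invol_classify (σ : Fin 4 → Fin 4) (h1 : ∀ j, σ (σ j) = j)
    (h2 : ∀ j, σ j ≠ j) : ∃ a : Fin 3, σ = tbl a := by
  have h4 : ∀ x : Fin 4, x = 0 ∨ x = 1 ∨ x = 2 ∨ x = 3 := by decide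
  have key : ∀ x y : Fin 4, σ x = y → σ y = x := by
    intro x y h; rw [← h, h1]
  rcases h4 (σ 0) with h0 | h0 | h0 | h0
  · exact absurd h0 (h2 0)
  · refine ⟨0, funext fun j => ?_⟩
    have e1 : σ 1 = 0 := key 0 1 h0
    have e2 : σ 2 = 3 := by
      rcases h4 (σ 2) with h | h | h | h
      · have := key 2 0 h; rw [h0] at this; exact absurd this (by decide)
      · have := key 2 1 h; rw [e1] at this; exact absurd this (by decide)
      · exact absurd h (h2 2)
      · exact h
    have e3 : σ 3 = 2 := key 2 3 e2
    fin_cases j <;> simp_all [tbl]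
  · refine ⟨1, funext fun j => ?_⟩
    have e2 : σ 2 = 0 := key 0 2 h0
    have e1 : σ 1 = 3 := by
      rcases h4 (σ 1) with h | h | h | h
      · have := key 1 0 h; rw [h0] at this; exact absurd this (by decide)
      · exact absurd h (h2 1)
      · have := key 1 2 h; rw [e2] at this; exact absurd this (by decide)
      · exact h
    have e3 : σ 3 = 1 := key 1 3 e1
    fin_cases j <;> simp_all [tbl]
  · refine ⟨2, funext fun j => ?_⟩
    have e3 : σ 3 = 0 := key 0 3 h0
    have e1 : σ 1 = 2 := by
      rcases h4 (σ 1) with h | h | h | h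
      · have := key 1 0 h; rw [h0] at this; exact absurd this (by decide)
      · exact absurd h (h2 1)
      · exact h
      · have := key 1 3 h; rw [e3] at this; exact absurd this (by decide)
    have e2 : σ 2 = 1 := key 1 2 e1
    fin_cases j <;> simp_all [tbl]

section Dec

variable {n : ℕ} (hn : 1 ≤ n)

/-- The decomposition corresponding to a choice of pairing at each vertex. -/
def decOf (c : Fin n → Fin 3) : (chainGraph n hn false false).Decomp :=
  ⟨fun h => (h.1, tbl (c h.1) h.2),
    ⟨fun h => by simp [tbl_invol]; rfl,
     fun h hh => tbl_ne (c h.1) h.2 (congrArg Prod.snd hh),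
     fun h => rfl⟩⟩

/-- The choice function corresponding to a decomposition. -/
def encOf (d : (chainGraph n hn false false).Decomp) : Fin n → Fin 3 := fun i =>
  if (d.1 (i, 0)).2 = 1 then 0 else if (d.1 (i, 0)).2 = 2 then 1 else 2

lemma dec_enc (d : (chainGraph n hn false false).Decomp) : decOf hn (encOf hn d) = d := by
  obtain ⟨p, hinv, hne, hv⟩ := d
  refine Subtype.ext (funext fun h => ?_)
  obtain ⟨i, j⟩ := h
  have hfst : ∀ j : Fin 4, (p (i, j)).1 = i := fun j => hv (i, j)
  set σ : Fin 4 → Fin 4 := fun j => (p (i, j)).2 with hσ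
  have hp : ∀ j : Fin 4, p (i, j) = (i, σ j) := by
    intro j; exact Prod.ext (hfst j) rfl
  have hσ1 : ∀ j, σ (σ j) = j := by
    intro j
    have := hinv (i, j)
    rw [hp j, hp (σ j)] at this
    exact congrArg Prod.snd this
  have hσ2 : ∀ j, σ j ≠ j := by
    intro j hj
    exact hne (i, j) (by rw [hp j, hj])
  obtain ⟨a, ha⟩ := fin4_invol_classify σ hσ1 hσ2
  have henc : encOf hn ⟨p, hinv, hne, hv⟩ i = a := by
    show (if (p (i, 0)).2 = 1 then (0 : Fin 3) else if (p (i, 0)).2 = 2 then 1 else 2) = a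
    rw [hp 0, ha]
    fin_cases a <;> simp [tbl]
  show (i, tbl _ j) = p (i, j)
  rw [henc, hp j, ha]

lemma enc_dec (c : Fin n → Fin 3) : encOf hn (decOf hn c) = c := by
  funext i
  unfold encOf decOf
  have : ∀ a : Fin 3, (if tbl a 0 = 1 then (0:Fin 3) else if tbl a 0 = 2 then 1 else 2) = a := by
    decide
  simpa using this (c i)

/-- Decompositions of the chain graph correspond to choices at each vertex. -/
def decEquiv : (Fin n → Fin 3) ≃ (chainGraph n hn false false).Decomp :=
  ⟨decOf hn, encOf hn, enc_dec hn, dec_enc hn⟩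

end Dec

section Cnt

variable {n : ℕ}

/-- `cnt c t` is the number of "join" vertices (`c m = 0`) among the first `t` vertices. -/
def cnt (c : Fin n → Fin 3) (t : ℕ) : ℕ :=
  ((Finset.range t).filter fun s => ∃ m : Fin n, m.val = s ∧ c m = 0).card

variable (c : Fin n → Fin 3)

lemma cnt_zero : cnt c 0 = 0 := by simp [cnt]

lemma cnt_succ_lt {t : ℕ} (h : t < n) :
    cnt c (t + 1) = cnt c t + if c ⟨t, h⟩ = 0 then 1 else 0 := by
  unfold cnt
  rw [Finset.range_add_one, Finset.filter_insert]
  by_cases hP : ∃ m : Fin n, m.val = t ∧ c m = 0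
  · obtain ⟨m, hm, hc⟩ := hP
    have hmt : m = ⟨t, h⟩ := Fin.ext hm
    rw [if_pos ⟨m, hm, hc⟩, if_pos (hmt ▸ hc),
      Finset.card_insert_of_notMem (fun hmem => by simp at hmem)]
  · have hc : ¬ c ⟨t, h⟩ = 0 := fun hc => hP ⟨⟨t, h⟩, rfl, hc⟩
    rw [if_neg hP, if_neg hc]
    omega

lemma cnt_succ_ge {t : ℕ} (h : n ≤ t) : cnt c (t + 1) = cnt c t := by
  unfold cnt
  rw [Finset.range_add_one, Finset.filter_insert, if_neg]
  rintro ⟨m, hm, -⟩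
  have := m.isLt
  omega

lemma cnt_mono : Monotone (cnt c) := by
  intro s t hst
  exact Finset.card_le_card (Finset.filter_subset_filter _ (Finset.range_subset_range.2 hst))

lemma cnt_stable (t : ℕ) : cnt c (n + t) = cnt c n := by
  induction t with
  | zero => rfl
  | succ s ih => rw [← Nat.add_assoc, cnt_succ_ge c (Nat.le_add_right n s), ih]

lemma cnt_le_total (t : ℕ) : cnt c t ≤ cnt c n := by
  rcases le_or_gt t n with h | h
  · exact cnt_mono c h
  · rw [show t = n + (t - n) by omega, cnt_stable]

lemma cnt_succ_le (t : ℕ) : cnt c (t + 1) ≤ cnt c t + 1 := by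
  rcases lt_or_ge t n with h | h
  · rw [cnt_succ_lt c h]; split <;> omega
  · rw [cnt_succ_ge c h]; omega

lemma join_unique {m m' : Fin n} (hm : c m = 0) (hm' : c m' = 0)
    (h : cnt c (m.val + 1) = cnt c (m'.val + 1)) : m = m' := by
  have key : ∀ a b : Fin n, c a = 0 → c b = 0 → a.val < b.val →
      cnt c (a.val + 1) < cnt c (b.val + 1) := by
    intro a b ha hb hab
    have h1 : cnt c (a.val + 1) ≤ cnt c b.val := cnt_mono c (by omega)
    have h2 : cnt c (b.val + 1) = cnt c b.val + 1 := by
      rw [cnt_succ_lt c b.isLt]; simp [Fin.eta, hb]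
    omega
  rcases lt_trichotomy m.val m'.val with hlt | heq | hgt
  · exact absurd h (by have := key m m' hm hm' hlt; omega)
  · exact Fin.ext heq
  · exact absurd h (by have := key m' m hm' hm hgt; omega)

lemma join_exists {t : ℕ} (h1 : 1 ≤ t) (h2 : t ≤ cnt c n) :
    ∃ m : Fin n, c m = 0 ∧ cnt c (m.val + 1) = t := by
  have hex : ∃ s, t ≤ cnt c s := ⟨n, h2⟩
  obtain ⟨s, hfind, hmin⟩ : ∃ s, t ≤ cnt c s ∧ ∀ u < s, ¬ t ≤ cnt c u :=
    ⟨Nat.find hex, Nat.find_spec hex, fun u hu => Nat.find_min hex hu⟩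
  have hs0 : s ≠ 0 := by
    intro h0
    rw [h0, cnt_zero] at hfind; omega
  obtain ⟨s', rfl⟩ : ∃ s', s = s' + 1 := ⟨s - 1, by omega⟩
  have hlt : cnt c s' < t := by
    by_contra hge
    exact hmin s' (by omega) (by omega)
  have hsn : s' < n := by
    by_contra hge
    rw [cnt_succ_ge c (by omega)] at hfind; omega
  have hstep := cnt_succ_lt c hsn
  have hc : c ⟨s', hsn⟩ = 0 := by
    by_contra hc
    rw [if_neg hc] at hstep; omega
  refine ⟨⟨s', hsn⟩, hc, ?_⟩
  rw [if_pos hc] at hstep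
  show cnt c (s' + 1) = t
  omega

end Cnt

section FinHelp

variable {n : ℕ} [NeZero n]

lemma fin_succ_val_mod (i : Fin n) : ((i + 1 : Fin n)).val = (i.val + 1) % n := by
  rw [Fin.add_def]
  show (i.val + (1 : Fin n).val) % n = (i.val + 1) % n
  rw [Fin.val_one']
  conv_rhs => rw [Nat.add_mod, Nat.mod_eq_of_lt i.isLt]

lemma fin_succ_val {i : Fin n} (h : i + 1 ≠ 0) : ((i + 1 : Fin n)).val = i.val + 1 := by
  rw [fin_succ_val_mod]
  have hlt : i.val < n := i.isLt
  rcases Nat.lt_or_ge (i.val + 1) n with h' | h'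
  · exact Nat.mod_eq_of_lt h'
  · exfalso
    apply h
    apply Fin.ext
    rw [fin_succ_val_mod]
    have : i.val + 1 = n := by omega
    simp [this]

lemma fin_last_val {i : Fin n} (h : i + 1 = 0) : i.val = n - 1 := by
  have := congrArg Fin.val h
  rw [fin_succ_val_mod] at this
  simp only [Fin.val_zero] at this
  have hlt : i.val < n := i.isLt
  rcases Nat.lt_or_ge (i.val + 1) n with h' | h'
  · rw [Nat.mod_eq_of_lt h'] at this; omega
  · omega

lemma fin_last_of_val {i : Fin n} (h : i.val = n - 1) : i + 1 = 0 := by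
  apply Fin.ext
  rw [fin_succ_val_mod, h]
  have : 1 ≤ n := Nat.one_le_iff_ne_zero.2 (NeZero.ne n)
  simp [show n - 1 + 1 = n by omega]

lemma fin_pos_val {i : Fin n} (h : i ≠ 0) : 1 ≤ i.val := by
  have : i.val ≠ 0 := fun h0 => h (Fin.ext (by rw [h0, Fin.val_zero]))
  omega

lemma fin_pred_val {i : Fin n} (h : i ≠ 0) : ((i - 1 : Fin n)).val = i.val - 1 := by
  have h1 : 1 ≤ i.val := fin_pos_val h
  have h2 : 2 ≤ n := by have := i.isLt; omega
  have hv1 : ((1 : Fin n)).val = 1 := by rw [Fin.val_one']; exact Nat.mod_eq_of_lt (by omega)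
  have hle : (1 : Fin n) ≤ i := by rw [Fin.le_def, hv1]; exact h1
  rw [Fin.coe_sub_iff_le.2 hle, hv1]


lemma fin_pred_ne_last {i : Fin n} (h : i ≠ 0) : (i - 1 : Fin n) + 1 ≠ 0 := by
  intro hc
  have h1 := fin_pred_val h
  have h2 := fin_last_val hc
  have h3 := i.isLt
  have h4 := fin_pos_val h
  omega

lemma fin_pred_succ {i : Fin n} (h : i ≠ 0) : (i - 1 : Fin n) + 1 = i := by
  apply Fin.ext
  rw [fin_succ_val (fin_pred_ne_last h), fin_pred_val h]
  have := fin_pos_val h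
  omega

lemma fin_succ_pred {i : Fin n} (h : i + 1 ≠ 0) : (i + 1 : Fin n) - 1 = i := by
  have h0 : (i + 1 : Fin n) ≠ 0 := by
    intro hc
    apply h
    exact hc
  apply Fin.ext
  rw [fin_pred_val h0, fin_succ_val h]
  omega

end FinHelp

lemma fin4_cases : ∀ j : Fin 4, j = 0 ∨ j = 1 ∨ j = 2 ∨ j = 3 := by decide

section Lab

variable {n : ℕ} [NeZero n] (hn : 1 ≤ n) (c : Fin n → Fin 3)

/-- The label (segment index) of a half-edge. -/
def lab (h : Fin n × Fin 4) : ℕ :=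
  cnt c (h.1.val + if 2 ≤ h.2.val then 1 else 0)

lemma lab_lo (i : Fin n) {j : Fin 4} (hj : j.val < 2) : lab c (i, j) = cnt c i.val := by
  show cnt c (i.val + if 2 ≤ j.val then 1 else 0) = cnt c i.val
  rw [if_neg (by omega), Nat.add_zero]

lemma lab_hi (i : Fin n) {j : Fin 4} (hj : 2 ≤ j.val) : lab c (i, j) = cnt c (i.val + 1) := by
  show cnt c (i.val + if 2 ≤ j.val then 1 else 0) = cnt c (i.val + 1)
  rw [if_pos hj]

lemma cnt_succ_i {i : Fin n} (hne : c i ≠ 0) : cnt c (i.val + 1) = cnt c i.val := by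
  rw [cnt_succ_lt c i.isLt]
  simp [Fin.eta, hne]

lemma cnt_succ_i0 {i : Fin n} (h0 : c i = 0) : cnt c (i.val + 1) = cnt c i.val + 1 := by
  rw [cnt_succ_lt c i.isLt]
  simp [Fin.eta, h0]

lemma lab_pair (i : Fin n) (j : Fin 4) :
    lab c ((decOf hn c).1 (i, j)) = lab c (i, j) := by
  show cnt c (i.val + if 2 ≤ (tbl (c i) j).val then 1 else 0)
      = cnt c (i.val + if 2 ≤ j.val then 1 else 0)
  by_cases hc : c i = 0
  · rw [hc]
    have h' : ∀ j : Fin 4,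
        (if 2 ≤ (tbl 0 j).val then (1:ℕ) else 0) = if 2 ≤ j.val then 1 else 0 := by decide
    rw [h' j]
  · have hs := cnt_succ_i c hc
    split_ifs <;> simp [hs]

lemma lab_pair' (i : Fin n) (j : Fin 4) :
    lab c (i, tbl (c i) j) = lab c (i, j) :=
  lab_pair (Nat.one_le_iff_ne_zero.2 (NeZero.ne n)) c i j

lemma lab_edg (h : Fin n × Fin 4) :
    lab c ((chainGraph n hn false false).edg h) = lab c h := by
  obtain ⟨i, j⟩ := h
  rcases fin4_cases j with rfl | rfl | rfl | rfl
  · rw [cg_edg0]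
    by_cases h0 : i = 0
    · rw [if_pos h0]
    · rw [if_neg h0, lab_lo c i (by decide), lab_hi c _ (by decide),
        fin_pred_val h0]
      have := fin_pos_val h0
      congr 1
      omega
  · rw [cg_edg1]
    by_cases h0 : i = 0
    · rw [if_pos h0]
    · rw [if_neg h0, lab_lo c i (by decide), lab_hi c _ (by decide),
        fin_pred_val h0]
      have := fin_pos_val h0
      congr 1
      omega
  · rw [cg_edg2]
    by_cases h1 : i + 1 = 0
    · rw [if_pos h1]
    · rw [if_neg h1, lab_hi c i (by decide), lab_lo c _ (by decide),
        fin_succ_val h1]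
  · rw [cg_edg3]
    by_cases h1 : i + 1 = 0
    · rw [if_pos h1]
    · rw [if_neg h1, lab_hi c i (by decide), lab_lo c _ (by decide),
        fin_succ_val h1]

lemma lab_eqv {h h' : Fin n × Fin 4}
    (he : Relation.EqvGen ((chainGraph n hn false false).dstep (decOf hn c)) h h') :
    lab c h = lab c h' := by
  induction he with
  | rel x y hxy =>
    rcases hxy with h | h
    · rw [← h, lab_edg hn c]
    · rw [← h, lab_pair hn c]
  | refl x => rfl
  | symm x y _ ih => exact ih.symm
  | trans x y z _ _ ih1 ih2 => exact ih1.trans ih2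

lemma cg_ext_iff (i : Fin n) (j : Fin 4) :
    (chainGraph n hn false false).IsExternal (i, j) ↔
      (i = 0 ∧ j.val < 2) ∨ (i + 1 = 0 ∧ 2 ≤ j.val) := by
  show (chainGraph n hn false false).edg (i, j) = (i, j) ↔ _
  rcases fin4_cases j with rfl | rfl | rfl | rfl
  · rw [cg_edg0]
    by_cases h0 : i = 0
    · simp [h0]; rfl
    · simp only [if_neg h0]
      constructor
      · intro hc
        exact absurd (congrArg Prod.snd hc) (by decide : ¬ ((2:Fin 4) = 0))
      · rintro (⟨h, -⟩ | ⟨-, h⟩)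
        · exact absurd h h0
        · exact absurd h (by decide)
  · rw [cg_edg1]
    by_cases h0 : i = 0
    · simp [h0]; rfl
    · simp only [if_neg h0]
      constructor
      · intro hc
        exact absurd (congrArg Prod.snd hc) (by decide : ¬ ((3:Fin 4) = 1))
      · rintro (⟨h, -⟩ | ⟨-, h⟩)
        · exact absurd h h0
        · exact absurd h (by decide)
  · rw [cg_edg2]
    by_cases h1 : i + 1 = 0
    · simp [h1]; rfl
    · simp only [if_neg h1]
      constructor
      · intro hc
        exact absurd (congrArg Prod.snd hc) (by decide : ¬ ((0:Fin 4) = 2))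
      · rintro (⟨-, h⟩ | ⟨h, -⟩)
        · exact absurd h (by decide)
        · exact absurd h h1
  · rw [cg_edg3]
    by_cases h1 : i + 1 = 0
    · simp [h1, show (2:ℕ) ≤ ((3:Fin 4)).val from by decide]; rfl
    · simp only [if_neg h1]
      constructor
      · intro hc
        exact absurd (congrArg Prod.snd hc) (by decide : ¬ ((1:Fin 4) = 3))
      · rintro (⟨-, h⟩ | ⟨h, -⟩)
        · exact absurd h (by decide)
        · exact absurd h h1

lemma lab_ext {h : Fin n × Fin 4}
    (hext : (chainGraph n hn false false).IsExternal h) :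
    lab c h = 0 ∨ lab c h = cnt c n := by
  obtain ⟨i, j⟩ := h
  rcases (cg_ext_iff hn i j).1 hext with ⟨h0, hj⟩ | ⟨h1, hj⟩
  · left
    rw [lab_lo c i hj, h0, Fin.val_zero, cnt_zero]
  · right
    rw [lab_hi c i hj, fin_last_val h1]
    have hn' : 1 ≤ n := hn
    congr 1
    omega

end Lab

section Reach

variable {n : ℕ} [NeZero n] (hn : 1 ≤ n) (c : Fin n → Fin 3)

/-- Reachability along a decomposition of the chain graph. -/
def Rrel : (Fin n × Fin 4) → (Fin n × Fin 4) → Prop :=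
  Relation.EqvGen ((chainGraph n hn false false).dstep (decOf hn c))

lemma R_edg (h : Fin n × Fin 4) : Rrel hn c h ((chainGraph n hn false false).edg h) :=
  Relation.EqvGen.rel _ _ (Or.inl rfl)

lemma R_pair (i : Fin n) (j : Fin 4) : Rrel hn c (i, j) (i, tbl (c i) j) :=
  Relation.EqvGen.rel _ _ (Or.inr rfl)

lemma R_left0 {i : Fin n} (h0 : i ≠ 0) : Rrel hn c (i, 0) (i - 1, 2) := by
  have h := R_edg hn c (i, 0)
  rwa [cg_edg0, if_neg h0] at h

lemma R_left1 {i : Fin n} (h0 : i ≠ 0) : Rrel hn c (i, 1) (i - 1, 3) := by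
  have h := R_edg hn c (i, 1)
  rwa [cg_edg1, if_neg h0] at h

lemma R_right2 {i : Fin n} (h1 : i + 1 ≠ 0) : Rrel hn c (i, 2) (i + 1, 0) := by
  have h := R_edg hn c (i, 2)
  rwa [cg_edg2, if_neg h1] at h

lemma R_right3 {i : Fin n} (h1 : i + 1 ≠ 0) : Rrel hn c (i, 3) (i + 1, 1) := by
  have h := R_edg hn c (i, 3)
  rwa [cg_edg3, if_neg h1] at h

lemma reach_join_step (i : Fin n)
    (IH : ∀ i' : Fin n, i'.val < i.val → ∀ j : Fin 4, 1 ≤ lab c (i', j) →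
      ∃ m : Fin n, c m = 0 ∧ cnt c (m.val + 1) = lab c (i', j) ∧ Rrel hn c (i', j) (m, 2)) :
    ∀ j : Fin 4, 1 ≤ lab c (i, j) →
      ∃ m : Fin n, c m = 0 ∧ cnt c (m.val + 1) = lab c (i, j) ∧ Rrel hn c (i, j) (m, 2) := by
  have key01 : ∀ j : Fin 4, j.val < 2 → 1 ≤ lab c (i, j) →
      ∃ m : Fin n, c m = 0 ∧ cnt c (m.val + 1) = lab c (i, j) ∧ Rrel hn c (i, j) (m, 2) := by
    intro j hj2 hj1
    rw [lab_lo c i hj2] at hj1 ⊢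
    have h0 : i ≠ 0 := by
      intro h0
      rw [h0, Fin.val_zero, cnt_zero] at hj1
      omega
    have hval := fin_pred_val h0
    have hpos := fin_pos_val h0
    have hlab2 : lab c ((i - 1 : Fin n), (2 : Fin 4)) = cnt c i.val := by
      rw [lab_hi c _ (by decide), hval]
      congr 1
      omega
    have hlab3 : lab c ((i - 1 : Fin n), (3 : Fin 4)) = cnt c i.val := by
      rw [lab_hi c _ (by decide), hval]
      congr 1
      omega
    have hdec : (i - 1 : Fin n).val < i.val := by omega
    have hj01 : j = 0 ∨ j = 1 := by
      rcases fin4_cases j with rfl | rfl | rfl | rfl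
      · exact Or.inl rfl
      · exact Or.inr rfl
      · exact absurd hj2 (by decide)
      · exact absurd hj2 (by decide)
    rcases hj01 with rfl | rfl
    · obtain ⟨m, hm0, hm1, hm2⟩ := IH (i - 1) hdec 2 (by rw [hlab2]; exact hj1)
      rw [hlab2] at hm1
      exact ⟨m, hm0, hm1, Relation.EqvGen.trans _ _ _ (R_left0 hn c h0) hm2⟩
    · obtain ⟨m, hm0, hm1, hm2⟩ := IH (i - 1) hdec 3 (by rw [hlab3]; exact hj1)
      rw [hlab3] at hm1
      exact ⟨m, hm0, hm1, Relation.EqvGen.trans _ _ _ (R_left1 hn c h0) hm2⟩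
  have key23 : ∀ j : Fin 4, 2 ≤ j.val → 1 ≤ lab c (i, j) →
      ∃ m : Fin n, c m = 0 ∧ cnt c (m.val + 1) = lab c (i, j) ∧ Rrel hn c (i, j) (m, 2) := by
    intro j hj2 hj1
    have hj23 : j = 2 ∨ j = 3 := by
      rcases fin4_cases j with rfl | rfl | rfl | rfl
      · exact absurd hj2 (by decide)
      · exact absurd hj2 (by decide)
      · exact Or.inl rfl
      · exact Or.inr rfl
    by_cases hc0 : c i = 0
    · refine ⟨i, hc0, (lab_hi c i hj2).symm, ?_⟩
      rcases hj23 with rfl | rfl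
      · exact Relation.EqvGen.refl _
      · have h := R_pair hn c i 3
        rw [hc0] at h
        rwa [show tbl 0 3 = 2 by decide] at h
    · have hlp := lab_pair' c i j
      have hlt : (tbl (c i) j).val < 2 := by
        have h3 : c i = 1 ∨ c i = 2 := by
          rcases (by decide : ∀ x : Fin 3, x = 0 ∨ x = 1 ∨ x = 2) (c i) with h | h | h
          · exact absurd h hc0
          · exact Or.inl h
          · exact Or.inr h
        rcases h3 with h | h <;> rw [h] <;> rcases hj23 with rfl | rfl <;> decide
      obtain ⟨m, hm0, hm1, hm2⟩ := key01 (tbl (c i) j) hlt (by rw [hlp]; exact hj1)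
      rw [hlp] at hm1
      exact ⟨m, hm0, hm1, Relation.EqvGen.trans _ _ _ (R_pair hn c i j) hm2⟩
  intro j hj
  rcases Nat.lt_or_ge j.val 2 with h | h
  · exact key01 j h hj
  · exact key23 j h hj

lemma reach_join (i : Fin n) (j : Fin 4) (hj : 1 ≤ lab c (i, j)) :
    ∃ m : Fin n, c m = 0 ∧ cnt c (m.val + 1) = lab c (i, j) ∧ Rrel hn c (i, j) (m, 2) := by
  have H : ∀ N : ℕ, ∀ i : Fin n, i.val ≤ N → ∀ j : Fin 4, 1 ≤ lab c (i, j) →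
      ∃ m : Fin n, c m = 0 ∧ cnt c (m.val + 1) = lab c (i, j) ∧ Rrel hn c (i, j) (m, 2) := by
    intro N
    induction N with
    | zero =>
      intro i hi
      exact reach_join_step hn c i (fun i' hi' => by omega)
    | succ N ihN =>
      intro i hi
      exact reach_join_step hn c i (fun i' hi' => ihN i' (by omega))
  exact H i.val i (le_refl _) j hj

lemma reach_left_step (i : Fin n)
    (IH : ∀ i' : Fin n, i'.val < i.val → ∀ j : Fin 4, lab c (i', j) = 0 →
      ∃ h' : Fin n × Fin 4, (chainGraph n hn false false).IsExternal h' ∧ Rrel hn c (i', j) h') :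
    ∀ j : Fin 4, lab c (i, j) = 0 →
      ∃ h' : Fin n × Fin 4, (chainGraph n hn false false).IsExternal h' ∧ Rrel hn c (i, j) h' := by
  have key01 : ∀ j : Fin 4, j.val < 2 → lab c (i, j) = 0 →
      ∃ h' : Fin n × Fin 4, (chainGraph n hn false false).IsExternal h' ∧ Rrel hn c (i, j) h' := by
    intro j hj2 hj1
    rw [lab_lo c i hj2] at hj1
    by_cases h0 : i = 0
    · exact ⟨(i, j), (cg_ext_iff hn i j).2 (Or.inl ⟨h0, hj2⟩), Relation.EqvGen.refl _⟩
    · have hval := fin_pred_val h0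
      have hpos := fin_pos_val h0
      have hdec : (i - 1 : Fin n).val < i.val := by omega
      have hj01 : j = 0 ∨ j = 1 := by
        rcases fin4_cases j with rfl | rfl | rfl | rfl
        · exact Or.inl rfl
        · exact Or.inr rfl
        · exact absurd hj2 (by decide)
        · exact absurd hj2 (by decide)
      have hlab2 : lab c ((i - 1 : Fin n), (2 : Fin 4)) = 0 := by
        rw [lab_hi c _ (by decide), hval, show i.val - 1 + 1 = i.val by omega]
        exact hj1
      have hlab3 : lab c ((i - 1 : Fin n), (3 : Fin 4)) = 0 := by
        rw [lab_hi c _ (by decide), hval, show i.val - 1 + 1 = i.val by omega]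
        exact hj1
      rcases hj01 with rfl | rfl
      · obtain ⟨h', he, hr⟩ := IH (i - 1) hdec 2 hlab2
        exact ⟨h', he, Relation.EqvGen.trans _ _ _ (R_left0 hn c h0) hr⟩
      · obtain ⟨h', he, hr⟩ := IH (i - 1) hdec 3 hlab3
        exact ⟨h', he, Relation.EqvGen.trans _ _ _ (R_left1 hn c h0) hr⟩
  intro j hj1
  rcases Nat.lt_or_ge j.val 2 with h | h
  · exact key01 j h hj1
  · -- j.val ≥ 2
    have hlab : lab c (i, j) = cnt c (i.val + 1) := lab_hi c i h
    have hc0 : c i ≠ 0 := by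
      intro hc
      rw [hlab, cnt_succ_i0 c hc] at hj1
      omega
    have hj23 : j = 2 ∨ j = 3 := by
      rcases fin4_cases j with rfl | rfl | rfl | rfl
      · exact absurd h (by decide)
      · exact absurd h (by decide)
      · exact Or.inl rfl
      · exact Or.inr rfl
    have hlp := lab_pair' c i j
    have hlt : (tbl (c i) j).val < 2 := by
      have h3 : c i = 1 ∨ c i = 2 := by
        rcases (by decide : ∀ x : Fin 3, x = 0 ∨ x = 1 ∨ x = 2) (c i) with h | h | h
        · exact absurd h hc0
        · exact Or.inl h
        · exact Or.inr h
      rcases h3 with h' | h' <;> rw [h'] <;> rcases hj23 with rfl | rfl <;> decide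
    obtain ⟨h', he, hr⟩ := key01 (tbl (c i) j) hlt (by rw [hlp]; exact hj1)
    exact ⟨h', he, Relation.EqvGen.trans _ _ _ (R_pair hn c i j) hr⟩

lemma reach_left (i : Fin n) (j : Fin 4) (hj : lab c (i, j) = 0) :
    ∃ h' : Fin n × Fin 4, (chainGraph n hn false false).IsExternal h' ∧ Rrel hn c (i, j) h' := by
  have H : ∀ N : ℕ, ∀ i : Fin n, i.val ≤ N → ∀ j : Fin 4, lab c (i, j) = 0 →
      ∃ h' : Fin n × Fin 4, (chainGraph n hn false false).IsExternal h' ∧ Rrel hn c (i, j) h' := by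
    intro N
    induction N with
    | zero =>
      intro i hi
      exact reach_left_step hn c i (fun i' hi' => by omega)
    | succ N ihN =>
      intro i hi
      exact reach_left_step hn c i (fun i' hi' => ihN i' (by omega))
  exact H i.val i (le_refl _) j hj

lemma reach_right_step (i : Fin n)
    (IH : ∀ i' : Fin n, i.val < i'.val → ∀ j : Fin 4, lab c (i', j) = cnt c n →
      ∃ h' : Fin n × Fin 4, (chainGraph n hn false false).IsExternal h' ∧ Rrel hn c (i', j) h') :
    ∀ j : Fin 4, lab c (i, j) = cnt c n →
      ∃ h' : Fin n × Fin 4, (chainGraph n hn false false).IsExternal h' ∧ Rrel hn c (i, j) h' := by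
  have key23 : ∀ j : Fin 4, 2 ≤ j.val → lab c (i, j) = cnt c n →
      ∃ h' : Fin n × Fin 4, (chainGraph n hn false false).IsExternal h' ∧ Rrel hn c (i, j) h' := by
    intro j hj2 hj1
    rw [lab_hi c i hj2] at hj1
    have hj23 : j = 2 ∨ j = 3 := by
      rcases fin4_cases j with rfl | rfl | rfl | rfl
      · exact absurd hj2 (by decide)
      · exact absurd hj2 (by decide)
      · exact Or.inl rfl
      · exact Or.inr rfl
    by_cases h1 : i + 1 = 0
    · exact ⟨(i, j), (cg_ext_iff hn i j).2 (Or.inr ⟨h1, hj2⟩), Relation.EqvGen.refl _⟩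
    · have hsv := fin_succ_val h1
      have hvlt : i.val + 1 < n := by
        rcases Nat.lt_or_ge (i.val + 1) n with h | h
        · exact h
        · have := i.isLt
          exact absurd (fin_last_of_val (by omega)) h1
      have hinc : i.val < (i + 1 : Fin n).val := by omega
      have hlab0 : lab c ((i + 1 : Fin n), (0 : Fin 4)) = cnt c n := by
        rw [lab_lo c _ (by decide), hsv]
        exact hj1
      have hlab1 : lab c ((i + 1 : Fin n), (1 : Fin 4)) = cnt c n := by
        rw [lab_lo c _ (by decide), hsv]
        exact hj1
      rcases hj23 with rfl | rfl
      · obtain ⟨h', he, hr⟩ := IH (i + 1) hinc 0 hlab0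
        exact ⟨h', he, Relation.EqvGen.trans _ _ _ (R_right2 hn c h1) hr⟩
      · obtain ⟨h', he, hr⟩ := IH (i + 1) hinc 1 hlab1
        exact ⟨h', he, Relation.EqvGen.trans _ _ _ (R_right3 hn c h1) hr⟩
  intro j hj1
  rcases Nat.lt_or_ge j.val 2 with h | h
  · -- j.val < 2
    rw [lab_lo c i h] at hj1
    have hc0 : c i ≠ 0 := by
      intro hc
      have h2 := cnt_succ_i0 c hc
      have h3 := cnt_le_total c (i.val + 1)
      omega
    have hj01 : j = 0 ∨ j = 1 := by
      rcases fin4_cases j with rfl | rfl | rfl | rfl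
      · exact Or.inl rfl
      · exact Or.inr rfl
      · exact absurd h (by decide)
      · exact absurd h (by decide)
    have hlp := lab_pair' c i j
    have hge : 2 ≤ (tbl (c i) j).val := by
      have h3 : c i = 1 ∨ c i = 2 := by
        rcases (by decide : ∀ x : Fin 3, x = 0 ∨ x = 1 ∨ x = 2) (c i) with h' | h' | h'
        · exact absurd h' hc0
        · exact Or.inl h'
        · exact Or.inr h'
      rcases h3 with h' | h' <;> rw [h'] <;> rcases hj01 with rfl | rfl <;> decide
    obtain ⟨h', he, hr⟩ := key23 (tbl (c i) j) hge
      (by rw [hlp, lab_lo c i h]; exact hj1)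
    exact ⟨h', he, Relation.EqvGen.trans _ _ _ (R_pair hn c i j) hr⟩
  · exact key23 j h hj1

lemma reach_right (i : Fin n) (j : Fin 4) (hj : lab c (i, j) = cnt c n) :
    ∃ h' : Fin n × Fin 4, (chainGraph n hn false false).IsExternal h' ∧ Rrel hn c (i, j) h' := by
  have H : ∀ N : ℕ, ∀ i : Fin n, n - 1 - i.val ≤ N → ∀ j : Fin 4, lab c (i, j) = cnt c n →
      ∃ h' : Fin n × Fin 4, (chainGraph n hn false false).IsExternal h' ∧ Rrel hn c (i, j) h' := by
    intro N
    induction N with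
    | zero =>
      intro i hi
      refine reach_right_step hn c i (fun i' hi' => ?_)
      have := i'.isLt
      omega
    | succ N ihN =>
      intro i hi
      exact reach_right_step hn c i (fun i' hi' => ihN i' (by have := i'.isLt; omega))
  exact H (n - 1 - i.val) i (le_refl _) j hj

end Reach

section Ncirc

variable {n : ℕ} [NeZero n] (hn : 1 ≤ n) (c : Fin n → Fin 3)

/-- The label map on circuits. -/
noncomputable def LabQ :
    (chainGraph n hn false false).Circuits (decOf hn c) → ℕ :=
  Quotient.lift (lab c) (fun _ _ hab => lab_eqv hn c hab)

lemma lab_le (h : Fin n × Fin 4) : lab c h ≤ cnt c n := cnt_le_total c _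

lemma closed_lab_mem (q : (chainGraph n hn false false).Circuits (decOf hn c))
    (hq : (chainGraph n hn false false).IsClosed (decOf hn c) q) :
    LabQ hn c q ∈ Finset.Ico 1 (cnt c n) := by
  obtain ⟨h₀, rfl⟩ := Quotient.exists_rep q
  obtain ⟨i₀, j₀⟩ := h₀
  have hlab : LabQ hn c (Quotient.mk _ (i₀, j₀)) = lab c (i₀, j₀) := rfl
  rw [hlab]
  rw [Finset.mem_Ico]
  constructor
  · by_contra hzero
    have h0 : lab c (i₀, j₀) = 0 := by omega
    obtain ⟨h', hext, hr⟩ := reach_left hn c i₀ j₀ h0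
    exact hq h' (Quotient.sound (Relation.EqvGen.symm _ _ hr)) hext
  · rcases Nat.lt_or_ge (lab c (i₀, j₀)) (cnt c n) with h | h
    · exact h
    · exfalso
      have hk : lab c (i₀, j₀) = cnt c n := le_antisymm (lab_le c _) h
      obtain ⟨h', hext, hr⟩ := reach_right hn c i₀ j₀ hk
      exact hq h' (Quotient.sound (Relation.EqvGen.symm _ _ hr)) hext

/-- The join vertex corresponding to a label. -/
noncomputable def jw (t : ℕ) (ht : t ∈ Finset.Ico 1 (cnt c n)) : Fin n :=
  (join_exists c (Finset.mem_Ico.1 ht).1 (le_of_lt (Finset.mem_Ico.1 ht).2)).choose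

lemma jw_spec (t : ℕ) (ht : t ∈ Finset.Ico 1 (cnt c n)) :
    c (jw c t ht) = 0 ∧ cnt c ((jw c t ht).val + 1) = t :=
  (join_exists c (Finset.mem_Ico.1 ht).1 (le_of_lt (Finset.mem_Ico.1 ht).2)).choose_spec

lemma jw_closed (t : ℕ) (ht : t ∈ Finset.Ico 1 (cnt c n)) :
    (chainGraph n hn false false).IsClosed (decOf hn c)
      ((chainGraph n hn false false).circuitOf (decOf hn c) (jw c t ht, 2)) := by
  intro h hh hext
  have hr := Quotient.exact hh
  have hlab : lab c h = lab c (jw c t ht, 2) := lab_eqv hn c hr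
  have h2 : lab c (jw c t ht, 2) = t := by
    rw [lab_hi c _ (by decide)]
    exact (jw_spec c t ht).2
  have hmem := Finset.mem_Ico.1 ht
  rcases lab_ext hn c hext with h0 | hk <;> omega

/-- Closed circuits correspond to middle labels. -/
noncomputable def closedEquiv :
    {q : (chainGraph n hn false false).Circuits (decOf hn c) //
      (chainGraph n hn false false).IsClosed (decOf hn c) q} ≃
      (Finset.Ico 1 (cnt c n)) where
  toFun := fun q => ⟨LabQ hn c q.1, closed_lab_mem hn c q.1 q.2⟩
  invFun := fun t =>
    ⟨(chainGraph n hn false false).circuitOf (decOf hn c) (jw c t.1 t.2, 2),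
      jw_closed hn c t.1 t.2⟩
  left_inv := by
    rintro ⟨q, hq⟩
    obtain ⟨h₀, rfl⟩ := Quotient.exists_rep q
    obtain ⟨i₀, j₀⟩ := h₀
    apply Subtype.ext
    show (chainGraph n hn false false).circuitOf (decOf hn c) _ = _
    have hmem := closed_lab_mem hn c _ hq
    have h1 : 1 ≤ lab c (i₀, j₀) := (Finset.mem_Ico.1 hmem).1
    obtain ⟨m, hm0, hm1, hm2⟩ := reach_join hn c i₀ j₀ h1
    have hspec := jw_spec c (LabQ hn c (Quotient.mk _ (i₀, j₀))) hmem
    have hmeq : m = jw c (LabQ hn c (Quotient.mk _ (i₀, j₀))) hmem :=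
      join_unique c hm0 hspec.1 (by rw [hm1, hspec.2]; rfl)
    rw [← hmeq]
    exact Quotient.sound (Relation.EqvGen.symm _ _ hm2)
  right_inv := by
    rintro ⟨t, ht⟩
    apply Subtype.ext
    show LabQ hn c (Quotient.mk _ (jw c t ht, 2)) = t
    have : LabQ hn c (Quotient.mk _ (jw c t ht, 2)) = lab c (jw c t ht, 2) := rfl
    rw [this, lab_hi c _ (by decide)]
    exact (jw_spec c t ht).2

lemma ncirc_eq :
    (chainGraph n hn false false).ncircuits (decOf hn c) = cnt c n - 1 := by
  unfold HGraph.ncircuits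
  rw [Nat.card_congr (closedEquiv hn c), Nat.card_eq_finsetCard, Nat.card_Ico]

end Ncirc

section Final

open Polynomial

variable {n : ℕ} [NeZero n]

lemma cnt_n_eq (c : Fin n → Fin 3) :
    cnt c n = (Finset.univ.filter fun m => c m = 0).card := by
  unfold cnt
  refine Finset.card_bij' (fun s hs => (⟨s, Finset.mem_range.1 (Finset.mem_filter.1 hs).1⟩ : Fin n))
    (fun m _ => m.val) ?_ ?_ ?_ ?_
  · intro s hs
    obtain ⟨hrange, m, hm, hc⟩ := Finset.mem_filter.1 hs
    refine Finset.mem_filter.2 ⟨Finset.mem_univ _, ?_⟩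
    have hms : m = (⟨s, Finset.mem_range.1 (Finset.mem_filter.1 hs).1⟩ : Fin n) := Fin.ext hm
    show c (⟨s, Finset.mem_range.1 (Finset.mem_filter.1 hs).1⟩ : Fin n) = 0
    rw [← hms]
    exact hc
  · intro m hm
    rw [Finset.mem_filter]
    exact ⟨Finset.mem_range.2 m.isLt, m, rfl, (Finset.mem_filter.1 hm).2⟩
  · intro s hs
    rfl
  · intro m hm
    rfl

lemma term_eq (c : Fin n → Fin 3) :
    (Polynomial.X : ℤ[X]) * Polynomial.X ^ (cnt c n - 1)
      = (∏ i : Fin n, if c i = 0 then (Polynomial.X : ℤ[X]) else 1)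
        + (Polynomial.X - 1) * ∏ i : Fin n, if c i = 0 then 0 else 1 := by
  have hK := cnt_n_eq c
  by_cases h0 : cnt c n = 0
  · have hall : ∀ i, c i ≠ 0 := by
      intro i hi
      have hmem : i ∈ Finset.univ.filter fun m => c m = 0 :=
        Finset.mem_filter.2 ⟨Finset.mem_univ _, hi⟩
      rw [hK, Finset.card_eq_zero] at h0
      rw [h0] at hmem
      exact absurd hmem (Finset.notMem_empty _)
    have h1 : (∏ i : Fin n, if c i = 0 then (Polynomial.X : ℤ[X]) else 1) = 1 :=
      Finset.prod_eq_one (fun i _ => if_neg (hall i))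
    have h2 : (∏ i : Fin n, if c i = 0 then (0 : ℤ[X]) else 1) = 1 :=
      Finset.prod_eq_one (fun i _ => if_neg (hall i))
    rw [h0, h1, h2]
    ring
  · have h1 : (∏ i : Fin n, if c i = 0 then (Polynomial.X : ℤ[X]) else 1)
        = Polynomial.X ^ (cnt c n) := by
      rw [Finset.prod_ite, Finset.prod_const, Finset.prod_const, one_pow, mul_one, hK]
    have h2 : (∏ i : Fin n, if c i = 0 then (0 : ℤ[X]) else 1) = 0 := by
      obtain ⟨i0, hi0⟩ : ∃ i, c i = 0 := by
        by_contra hno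
        push_neg at hno
        apply h0
        rw [hK, Finset.card_eq_zero, Finset.filter_eq_empty_iff]
        exact fun i _ => hno i
      exact Finset.prod_eq_zero (Finset.mem_univ i0) (if_pos hi0)
    rw [h1, h2, mul_zero, add_zero, ← pow_succ']
    congr 1
    omega

lemma sum_A :
    ∑ c : Fin n → Fin 3, (∏ i : Fin n, if c i = 0 then (Polynomial.X : ℤ[X]) else 1)
      = (Polynomial.X + 2) ^ n := by
  have key := Finset.prod_univ_sum (fun _ : Fin n => (Finset.univ : Finset (Fin 3)))
    (fun _ v => if v = 0 then (Polynomial.X : ℤ[X]) else 1)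
  rw [← Fintype.piFinset_univ, ← key]
  have hfac : ∀ _i : Fin n,
      (∑ v : Fin 3, if v = 0 then (Polynomial.X : ℤ[X]) else 1) = Polynomial.X + 2 := by
    intro i
    rw [Fin.sum_univ_three]
    norm_num
    rw [if_neg (by decide : ¬(2 : Fin 3) = 0)]
    ring
  rw [Finset.prod_congr rfl (fun i _ => hfac i), Finset.prod_const, Finset.card_univ,
    Fintype.card_fin]

lemma sum_B :
    ∑ c : Fin n → Fin 3, (∏ i : Fin n, if c i = 0 then (0 : ℤ[X]) else 1)
      = (2 : ℤ[X]) ^ n := by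
  have key := Finset.prod_univ_sum (fun _ : Fin n => (Finset.univ : Finset (Fin 3)))
    (fun _ v => if v = 0 then (0 : ℤ[X]) else 1)
  rw [← Fintype.piFinset_univ, ← key]
  have hfac : ∀ _i : Fin n,
      (∑ v : Fin 3, if v = 0 then (0 : ℤ[X]) else 1) = 2 := by
    intro i
    rw [Fin.sum_univ_three]
    norm_num
    rw [if_neg (by decide : ¬(2 : Fin 3) = 0)]
    norm_num
  rw [Finset.prod_congr rfl (fun i _ => hfac i), Finset.prod_const, Finset.card_univ,
    Fintype.card_fin]

lemma main_calc (hn : 1 ≤ n) :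
    Polynomial.X * (chainGraph n hn false false).J =
      (Polynomial.X - 1) * Polynomial.C ((2 : ℤ) ^ n) +
        (Polynomial.X + Polynomial.C (2 : ℤ)) ^ n := by
  have hJ : (chainGraph n hn false false).J
      = ∑ c : Fin n → Fin 3,
          (Polynomial.X : ℤ[X]) ^ ((chainGraph n hn false false).ncircuits (decOf hn c)) := by
    unfold HGraph.J
    exact (Equiv.sum_comp (decEquiv hn)
      (fun d => (Polynomial.X : ℤ[X]) ^ ((chainGraph n hn false false).ncircuits d))).symm
  rw [hJ]
  have hterm : ∀ c : Fin n → Fin 3,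
      (Polynomial.X : ℤ[X]) ^ ((chainGraph n hn false false).ncircuits (decOf hn c))
        = Polynomial.X ^ (cnt c n - 1) := by
    intro c
    rw [ncirc_eq hn c]
  rw [Finset.sum_congr rfl (fun c _ => hterm c), Finset.mul_sum]
  rw [Finset.sum_congr rfl (fun c _ => term_eq c), Finset.sum_add_distrib, ← Finset.mul_sum]
  rw [sum_A, sum_B]
  have hC2 : (Polynomial.C (2 : ℤ) : ℤ[X]) = 2 := by
    norm_num
  have hC2n : (Polynomial.C ((2 : ℤ) ^ n) : ℤ[X]) = 2 ^ n := by
    rw [map_pow, hC2]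
  rw [hC2, hC2n]
  ring

end Final

/-- For every `L ≥ 1`, the vertex-type graph `C_L` — a chain of
`L+1` four-valent vertices with consecutive vertices joined by double edges and two
external half-edges at each of the two end vertices (a chain of `L` fish graphs,
open at both ends) — satisfies `N·J(C_L, N) = (N-1)·2^(L+1) + (N+2)^(L+1)`. -/
theorem bubble_vertex_circuit_partition (L : ℕ) (hL : 1 ≤ L) :
    Polynomial.X * (chainGraph (L + 1) (by omega) false false).J =
      (Polynomial.X - 1) * Polynomial.C ((2 : ℤ) ^ (L + 1)) +
        (Polynomial.X + Polynomial.C (2 : ℤ)) ^ (L + 1) := by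
  exact main_calc (by omega)
end
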